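/- arXiv:2304.14781 — 7 statements merged into one kernel-verified Lean document; each statement's English description precedes it below -/
import Mathlib

section
/- Let C ⊂ ℝ^d be a nonempty closed set, let ξ be a unit vector, let x_0 ∈ ℝ^d, and define φ(R) = dist(x_0 + Rξ, C ∩ closure(B_R(x_0))) − R for R such that C ∩ closure(B_R(x_0)) is nonempty. Then φ is nonincreasing on this set of radii. -/
open MeasureTheory Metric Filter Set
open scoped ENNReal NNReal Topology

noncomputable section

/-- The support of a measure: points all of whose neighborhoods have positive mass. -/
def msupport {E : Type*} [MetricSpace E] [MeasurableSpace E] (ν : Measure E) : Set E :=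
  {x | ∀ r > 0, 0 < ν (ball x r)}

open Classical in
/-- The length functional: `min {α ≥ 0 | α • ν ≥ H¹⌊supp ν}` if `supp ν` is connected,
`+∞` otherwise (with `min ∅ = +∞`). -/
noncomputable def lengthF {E : Type*} [MetricSpace E] [MeasurableSpace E] [BorelSpace E]
    (ν : Measure E) : ℝ≥0∞ :=
  if IsConnected (msupport ν) then
    sInf {α : ℝ≥0∞ | (μH[1] : Measure E).restrict (msupport ν) ≤ α • ν}
  else ⊤

/-- The p-th power of the p-Wasserstein distance, as an infimum over couplings. -/
noncomputable def Wpp {E : Type*} [MetricSpace E] [MeasurableSpace E]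
    (p : ℝ) (μ ν : Measure E) : ℝ≥0∞ :=
  ⨅ (γ : Measure (E × E)) (_ : γ.map Prod.fst = μ ∧ γ.map Prod.snd = ν),
    ∫⁻ z, edist z.1 z.2 ^ p ∂γ

/-- The energy `W_p^p(ρ₀, ν) + Λ L(ν)`. -/
noncomputable def energyF {E : Type*} [MetricSpace E] [MeasurableSpace E] [BorelSpace E]
    (p Λ : ℝ) (ρ₀ ν : Measure E) : ℝ≥0∞ :=
  Wpp p ρ₀ ν + ENNReal.ofReal Λ * lengthF ν

/-- Kuratowski convergence of a sequence of (closed) sets. -/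
def KuraTendsto {E : Type*} [MetricSpace E] (C : ℕ → Set E) (L : Set E) : Prop :=
  (∀ u : ℕ → E, (∀ n, u n ∈ C n) → ∀ x : E, MapClusterPt x atTop u → x ∈ L) ∧
  (∀ x ∈ L, ∃ u : ℕ → E, (∀ n, u n ∈ C n) ∧ Tendsto u atTop (𝓝 x))

theorem infDist_le_infDist_add_dist_of_subset {α : Type*} [PseudoMetricSpace α] {s t : Set α}
    (hst : s ⊆ t) (hs : s.Nonempty) (x y : α) : infDist x t ≤ infDist y s + dist x y :=
  (infDist_le_infDist_of_subset hst hs).trans infDist_le_infDist_add_dist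

theorem dist_add_smul_add_smul_le {E : Type*} [SeminormedAddCommGroup E] [NormedSpace ℝ E]
    {ξ : E} (hξ : ‖ξ‖ ≤ 1) (x₀ : E) {R R' : ℝ} (hRR' : R' ≤ R) :
    dist (x₀ + R • ξ) (x₀ + R' • ξ) ≤ R - R' := by
  rw [dist_add_left, dist_eq_norm, ← sub_smul, norm_smul, Real.norm_of_nonneg (sub_nonneg.2 hRR')]
  exact mul_le_of_le_one_right (sub_nonneg.2 hRR') hξ

theorem infDist_add_smul_inter_closedBall_sub_le {E : Type*} [SeminormedAddCommGroup E]
    [NormedSpace ℝ E] (C : Set E) {ξ : E} (hξ : ‖ξ‖ ≤ 1) (x₀ : E) {R R' : ℝ} (hRR' : R' ≤ R)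
    (h' : (C ∩ closedBall x₀ R').Nonempty) :
    infDist (x₀ + R • ξ) (C ∩ closedBall x₀ R) - R ≤
      infDist (x₀ + R' • ξ) (C ∩ closedBall x₀ R') - R' := by
  have hsub : C ∩ closedBall x₀ R' ⊆ C ∩ closedBall x₀ R :=
    inter_subset_inter_right C (closedBall_subset_closedBall hRR')
  linarith [infDist_le_infDist_add_dist_of_subset hsub h' (x₀ + R • ξ) (x₀ + R' • ξ),
    dist_add_smul_add_smul_le hξ x₀ hRR']

theorem stmt_2_general {d : ℕ} (C : Set (EuclideanSpace ℝ (Fin d)))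
    (ξ x₀ : EuclideanSpace ℝ (Fin d)) (hξ : ‖ξ‖ = 1)
    (R R' : ℝ) (hRR' : R' ≤ R) (h' : (C ∩ closedBall x₀ R').Nonempty) :
    infDist (x₀ + R • ξ) (C ∩ closedBall x₀ R) - R ≤
      infDist (x₀ + R' • ξ) (C ∩ closedBall x₀ R') - R' :=
  infDist_add_smul_inter_closedBall_sub_le C hξ.le x₀ hRR' h'

/-- for a nonempty closed set `C`, a unit vector `ξ` and `x₀`, the function
`φ(R) = dist(x₀ + R ξ, C ∩ closedBall x₀ R) − R` is nonincreasing on the set of radii for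
which `C ∩ closedBall x₀ R` is nonempty. -/
theorem stmt_2 {d : ℕ} (C : Set (EuclideanSpace ℝ (Fin d))) (hC : IsClosed C)
    (hne : C.Nonempty) (ξ x₀ : EuclideanSpace ℝ (Fin d)) (hξ : ‖ξ‖ = 1)
    (R R' : ℝ) (hRR' : R' ≤ R) (h' : (C ∩ closedBall x₀ R').Nonempty) :
    infDist (x₀ + R • ξ) (C ∩ closedBall x₀ R) - R ≤
      infDist (x₀ + R' • ξ) (C ∩ closedBall x₀ R') - R' :=
  stmt_2_general C ξ x₀ hξ R R' hRR' h'

end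
end

section
/- Let ν be a probability measure on ℝ^d with connected support. If the upper density D(x) = limsup_{r→0} H^1(B_r(x) ∩ supp ν)/ν(B_r(x)) is bounded over supp ν, then H^1⌊supp ν is a Radon measure, i.e. H^1(K ∩ supp ν) < ∞ for every compact K. -/
open MeasureTheory Metric Filter Set
open scoped ENNReal NNReal Topology

noncomputable section

/-- if the upper derivative
`D(x) = limsup_{r→0} H¹(B_r(x) ∩ supp ν)/ν(B_r(x))` is bounded on `supp ν`, then
`H¹⌊supp ν` is a Radon measure: `H¹(K ∩ supp ν) < ∞` for every compact `K`. -/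
theorem stmt_5 {d : ℕ} (ν : Measure (EuclideanSpace ℝ (Fin d))) [IsProbabilityMeasure ν]
    (hconn : IsConnected (msupport ν)) (M : ℝ≥0∞) (hM : M < ⊤)
    (hbd : ∀ x ∈ msupport ν,
      limsup (fun r : ℝ => μH[1] (ball x r ∩ msupport ν) / ν (ball x r)) (𝓝[>] 0) ≤ M) :
    ∀ K : Set (EuclideanSpace ℝ (Fin d)), IsCompact K → μH[1] (K ∩ msupport ν) < ⊤ := by
  classical
  set E := EuclideanSpace ℝ (Fin d)
  set S := msupport ν with hSdef
  -- choose good radii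
  have key : ∀ x : S, ∃ r : ℝ, 0 < r ∧ r ≤ 1 ∧
      μH[1] (ball (x : E) r ∩ S) ≤ (M + 1) * ν (ball (x : E) r) := by
    rintro ⟨x, hx⟩
    have h1 : limsup (fun r : ℝ => μH[1] (ball x r ∩ S) / ν (ball x r)) (𝓝[>] 0) < M + 1 :=
      lt_of_le_of_lt (hbd x hx) (ENNReal.lt_add_right hM.ne one_ne_zero)
    have h2 := Filter.eventually_lt_of_limsup_lt h1
    have h3 : ∀ᶠ r in 𝓝[>] (0 : ℝ), r ∈ Set.Ioo (0 : ℝ) 1 := by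
      apply Ioo_mem_nhdsGT_of_mem
      exact ⟨le_refl 0, one_pos⟩
    obtain ⟨r, hr1, hr2⟩ := (h2.and h3).exists
    refine ⟨r, hr2.1, hr2.2.le, ?_⟩
    have hν0 : ν (ball x r) ≠ 0 := (hx r hr2.1).ne'
    have hνt : ν (ball x r) ≠ ⊤ := measure_ne_top ν _
    exact le_of_lt ((ENNReal.div_lt_iff (Or.inl hν0) (Or.inl hνt)).1 hr1)
  choose rad hrpos hrle hrbd using key
  obtain ⟨N, τ, hτ, hSC⟩ := (inferInstance : HasBesicovitchCovering E).no_satelliteConfig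
  let q : Besicovitch.BallPackage S E :=
    { c := fun x => (x : E), r := rad, rpos := hrpos, r_bound := 1, r_le := hrle }
  obtain ⟨s, hdisj, hcov⟩ := Besicovitch.exist_disjoint_covering_families hτ hSC q
  have hScov : S ⊆ ⋃ i : Fin N, ⋃ j ∈ s i, (ball ((j : E)) (rad j) ∩ S) := by
    intro x hx
    have : x ∈ range q.c := ⟨⟨x, hx⟩, rfl⟩
    obtain ⟨i, hi⟩ := mem_iUnion.1 (hcov this)
    simp only [mem_iUnion] at hi ⊢
    obtain ⟨j, hj, hxj⟩ := hi
    exact ⟨i, j, hj, hxj, hx⟩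
  have hcount : ∀ i : Fin N, (s i).Countable := by
    intro i
    have hd : Pairwise (Function.onFun Disjoint fun j : s i => closedBall ((j : S) : E) (rad j)) := by
      intro a b hab
      exact hdisj i a.2 b.2 (fun h => hab (Subtype.ext h))
    have := MeasureTheory.Measure.countable_meas_pos_of_disjoint_iUnion (μ := ν)
      (As := fun j : s i => closedBall ((j : S) : E) (rad j))
      (fun j => measurableSet_closedBall) hd
    have huniv : {j : s i | 0 < ν (closedBall ((j : S) : E) (rad j))} = univ := by
      ext j
      simp only [mem_setOf_eq, mem_univ, iff_true]
      exact lt_of_lt_of_le ((j : S).2 (rad j) (hrpos _)) (measure_mono ball_subset_closedBall)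
    rw [huniv] at this
    have : Countable (s i) := Set.countable_univ_iff.1 this
    exact Set.countable_coe_iff.1 this
  have hbound : ∀ i : Fin N, μH[1] (⋃ j ∈ s i, (ball ((j : E)) (rad j) ∩ S)) ≤ M + 1 := by
    intro i
    calc μH[1] (⋃ j ∈ s i, (ball ((j : E)) (rad j) ∩ S))
        ≤ ∑' j : s i, μH[1] (ball (((j : S) : E)) (rad j) ∩ S) :=
          measure_biUnion_le _ (hcount i) _
      _ ≤ ∑' j : s i, (M + 1) * ν (ball (((j : S) : E)) (rad j)) :=
          ENNReal.tsum_le_tsum fun j => hrbd _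
      _ = (M + 1) * ∑' j : s i, ν (ball (((j : S) : E)) (rad j)) := ENNReal.tsum_mul_left
      _ ≤ (M + 1) * ∑' j : s i, ν (closedBall (((j : S) : E)) (rad j)) := by
          gcongr with j
          exact ball_subset_closedBall
      _ ≤ (M + 1) * ν (⋃ j : s i, closedBall (((j : S) : E)) (rad j)) := by
          gcongr
          apply MeasureTheory.tsum_meas_le_meas_iUnion_of_disjoint
          · exact fun j => measurableSet_closedBall
          · intro a b hab
            exact hdisj i a.2 b.2 (fun h => hab (Subtype.ext h))
      _ ≤ (M + 1) * ν univ := by gcongr; exact subset_univ _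
      _ = M + 1 := by simp
  intro K hK
  have : μH[1] (K ∩ S) ≤ ∑ i : Fin N, (M + 1) := by
    calc μH[1] (K ∩ S) ≤ μH[1] (⋃ i : Fin N, ⋃ j ∈ s i, (ball ((j : E)) (rad j) ∩ S)) :=
          measure_mono (inter_subset_right.trans hScov)
      _ ≤ ∑ i : Fin N, μH[1] (⋃ j ∈ s i, (ball ((j : E)) (rad j) ∩ S)) :=
          measure_iUnion_fintype_le _ _
      _ ≤ ∑ i : Fin N, (M + 1) := Finset.sum_le_sum fun i _ => hbound i
  refine lt_of_le_of_lt this ?_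
  simp only [Finset.sum_const, Finset.card_univ, Fintype.card_fin, nsmul_eq_mul]
  exact ENNReal.mul_lt_top (by simp) (ENNReal.lt_add_right hM.ne one_ne_zero |> fun _ => ENNReal.add_lt_top.2 ⟨hM, ENNReal.one_lt_top⟩)


end
end

section
/- Let f : ℝ^d → ℝ^d be k-Lipschitz with k > 0 and ν a probability measure on ℝ^d. Then L(f_#ν) ≤ k·L(ν), where L is the length functional L(μ) = min{α ≥ 0 : αμ ≥ H^1⌊supp μ} if supp μ is connected, and +∞ otherwise. -/
/-! If `L(ν) < ∞`, then `supp ν` is connected and carries finite `H¹` measure; a connected set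
has `H¹` measure at least its diameter, so `supp ν` is compact and `supp f_#ν = f(supp ν)` is
connected. Since `H¹(f(A)) ≤ k H¹(A)`, every `α` with `H¹⌊supp ν ≤ α ν` gives
`H¹⌊supp f_#ν ≤ k α f_#ν`. -/

open MeasureTheory Metric Filter Set
open scoped ENNReal NNReal Topology

noncomputable section

namespace ENNReal

theorem sInf_le_mul_sInf {k : ℝ≥0∞} (hk₀ : k ≠ 0) (hk : k ≠ ⊤) {S T : Set ℝ≥0∞}
    (h : ∀ α ∈ S, k * α ∈ T) : sInf T ≤ k * sInf S := by
  rw [sInf_eq_iInf' S, mul_iInf_of_ne hk₀ hk]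
  exact le_iInf fun α ↦ sInf_le (h α α.2)

end ENNReal

namespace MeasureTheory.Measure

variable {X Y : Type*} [TopologicalSpace X] [MeasurableSpace X] [TopologicalSpace Y]
  [MeasurableSpace Y]

theorem image_support_subset_support_map [OpensMeasurableSpace X] [BorelSpace Y]
    {f : X → Y} (hf : Continuous f) (ν : Measure X) :
    f '' ν.support ⊆ (ν.map f).support := by
  rintro _ ⟨x, hx, rfl⟩
  rw [mem_support_iff_forall] at hx ⊢
  exact fun U hU ↦ (hx _ (hf.continuousAt hU)).trans_le
    (le_map_apply hf.measurable.aemeasurable U)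

theorem support_map_subset_closure_image [HereditarilyLindelofSpace X]
    [OpensMeasurableSpace X] [BorelSpace Y] {f : X → Y} (hf : Continuous f) (ν : Measure X) :
    (ν.map f).support ⊆ closure (f '' ν.support) := by
  refine support_subset_of_isClosed isClosed_closure ?_
  rw [mem_ae_iff, map_apply hf.measurable isClosed_closure.isOpen_compl.measurableSet]
  refine measure_mono_null ?_ (measure_compl_support (μ := ν))
  exact fun x hx hxs ↦ hx (subset_closure (mem_image_of_mem f hxs))

theorem support_map_eq_image [HereditarilyLindelofSpace X] [OpensMeasurableSpace X]
    [BorelSpace Y] [T2Space Y] {f : X → Y} (hf : Continuous f) {ν : Measure X}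
    (hν : IsCompact ν.support) : (ν.map f).support = f '' ν.support :=
  (support_map_subset_closure_image hf ν).trans (hν.image hf).isClosed.closure_subset
    |>.antisymm (image_support_subset_support_map hf ν)

end MeasureTheory.Measure

section

variable {E F : Type*} [MetricSpace E] [MeasurableSpace E] [MetricSpace F] [MeasurableSpace F]

theorem msupport_eq_support (ν : Measure E) : msupport ν = ν.support := by
  ext x
  exact nhds_basis_ball.mem_measureSupport.symm

variable [BorelSpace E] [BorelSpace F]

theorem IsPreconnected.ediam_le_hausdorffMeasure_one {S : Set E} (hS : IsPreconnected S) :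
    ediam S ≤ μH[1] S := by
  refine ediam_le fun x hx y hy ↦ ?_
  have hdist : LipschitzWith 1 (dist x ·) := LipschitzWith.dist_right x
  have hIcc : Icc 0 (dist x y) ⊆ (dist x ·) '' S :=
    (hS.image _ hdist.continuous.continuousOn).Icc_subset ⟨x, hx, dist_self x⟩ ⟨y, hy, rfl⟩
  calc edist x y = volume (Icc 0 (dist x y)) := by
        rw [Real.volume_Icc, sub_zero, edist_dist]
    _ ≤ μH[1] ((dist x ·) '' S) := by
        rw [hausdorffMeasure_real]; exact measure_mono hIcc
    _ ≤ μH[1] S := by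
        simpa using hdist.hausdorffMeasure_image_le zero_le_one S

theorem IsPreconnected.isCompact_of_hausdorffMeasure_one_ne_top [ProperSpace E] {S : Set E}
    (hS : IsPreconnected S) (hS_closed : IsClosed S) (hS_fin : μH[1] S ≠ ⊤) : IsCompact S :=
  Metric.isCompact_of_isClosed_isBounded hS_closed <| isBounded_iff_ediam_ne_top.2 <|
    ne_top_of_le_ne_top hS_fin hS.ediam_le_hausdorffMeasure_one

theorem LipschitzWith.hausdorffMeasure_restrict_image_le_smul_map {K : ℝ≥0} {f : E → F}
    (hf : LipschitzWith K f) {s : Set E} {ν : Measure E} {α : ℝ≥0∞}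
    (h : (μH[1] : Measure E).restrict s ≤ α • ν) :
    (μH[1] : Measure F).restrict (f '' s) ≤ (K * α) • ν.map f := by
  have hfm := hf.continuous.measurable
  refine Measure.le_iff.2 fun A hA ↦ ?_
  have hpre := Measure.le_iff.1 h (f ⁻¹' A) (hfm hA)
  rw [Measure.restrict_apply (hfm hA), Measure.smul_apply, smul_eq_mul] at hpre
  rw [Measure.restrict_apply hA, Measure.smul_apply, smul_eq_mul, Measure.map_apply hfm hA,
    ← image_preimage_inter, mul_assoc]
  calc μH[1] (f '' (f ⁻¹' A ∩ s)) ≤ K * μH[1] (f ⁻¹' A ∩ s) := by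
        simpa using hf.hausdorffMeasure_image_le zero_le_one (f ⁻¹' A ∩ s)
    _ ≤ K * (α * ν (f ⁻¹' A)) := by gcongr

theorem isConnected_support_of_lengthF_ne_top {ν : Measure E} (h : lengthF ν ≠ ⊤) :
    IsConnected ν.support := by
  by_contra hν
  rw [lengthF, msupport_eq_support, if_neg hν] at h
  exact h rfl

theorem lengthF_eq_sInf {ν : Measure E} (h : IsConnected ν.support) :
    lengthF ν = sInf {α | (μH[1] : Measure E).restrict ν.support ≤ α • ν} := by
  rw [lengthF, msupport_eq_support, if_pos h]

end

/-- if `f` is `k`-Lipschitz with `k > 0` and `ν` is a probability measure,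
then `L(f#ν) ≤ k · L(ν)`. -/
theorem stmt_6 {d : ℕ} (k : ℝ≥0) (hk : 0 < k)
    (f : EuclideanSpace ℝ (Fin d) → EuclideanSpace ℝ (Fin d)) (hf : LipschitzWith k f)
    (ν : Measure (EuclideanSpace ℝ (Fin d))) [IsProbabilityMeasure ν] :
    lengthF (ν.map f) ≤ (k : ℝ≥0∞) * lengthF ν := by
  obtain hL | hL := eq_or_ne (lengthF ν) ⊤
  · rw [hL, ENNReal.mul_top (by exact_mod_cast hk.ne')]
    exact le_top
  have hconn := isConnected_support_of_lengthF_ne_top hL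
  obtain ⟨α, hα, hα_fin⟩ : ∃ α, μH[1].restrict ν.support ≤ α • ν ∧ α < ⊤ := by
    rwa [lengthF_eq_sInf hconn, ← lt_top_iff_ne_top, sInf_lt_iff] at hL
  have hfin : μH[1] ν.support ≠ ⊤ :=
    ne_top_of_le_ne_top hα_fin.ne (by simpa using Measure.le_iff'.1 hα univ)
  have hsupp := Measure.support_map_eq_image hf.continuous
    (hconn.isPreconnected.isCompact_of_hausdorffMeasure_one_ne_top
      Measure.isClosed_support hfin)
  have hconn' : IsConnected (ν.map f).support :=
    hsupp ▸ hconn.image f hf.continuous.continuousOn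
  rw [lengthF_eq_sInf hconn, lengthF_eq_sInf hconn', hsupp]
  exact ENNReal.sInf_le_mul_sInf (by exact_mod_cast hk.ne') ENNReal.coe_ne_top
    fun _ ↦ hf.hausdorffMeasure_restrict_image_le_smul_map

end
end

section
/- Let ν be a probability measure on ℝ^d with L(ν) < +∞ (L the length functional). Then H^1(supp ν) ≤ L(ν), with equality if and only if either ν is a Dirac mass, or H^1(supp ν) > 0 and ν = (1/H^1(supp ν)) · H^1⌊supp ν. -/
open MeasureTheory Metric Filter Set
open scoped ENNReal NNReal Topology

noncomputable section

set_option linter.unusedSectionVars false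

section Aux
variable {E : Type*} [MetricSpace E] [MeasurableSpace E]

lemma compl_msupport_null [SecondCountableTopology E] (ν : Measure E) :
    ν (msupport ν)ᶜ = 0 := by
  refine measure_null_of_locally_null _ fun x hx => ?_
  simp only [msupport, mem_compl_iff, mem_setOf_eq, not_forall, not_lt, nonpos_iff_eq_zero] at hx
  obtain ⟨r, hr, hr0⟩ := hx
  exact ⟨ball x r, mem_nhdsWithin_of_mem_nhds (ball_mem_nhds x hr), hr0⟩

lemma msupport_dirac [OpensMeasurableSpace E] (x : E) :
    msupport (Measure.dirac x : Measure E) = {x} := by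
  ext y
  simp only [msupport, mem_setOf_eq, mem_singleton_iff]
  constructor
  · intro h
    have hxy : ∀ r > 0, dist x y < r := by
      intro r hr
      have h2 := h r hr
      rw [Measure.dirac_apply' _ measurableSet_ball] at h2
      by_contra hxy
      rw [Set.indicator_of_notMem (by simpa [mem_ball] using hxy)] at h2
      exact lt_irrefl 0 h2
    have : dist x y = 0 := by
      by_contra hne
      exact lt_irrefl _ (hxy _ (lt_of_le_of_ne dist_nonneg (Ne.symm hne)))
    exact (eq_of_dist_eq_zero this).symm
  · rintro rfl
    intro r hr
    rw [Measure.dirac_apply' _ measurableSet_ball]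
    simp [mem_ball, hr]

end Aux

section Aux2
variable {E : Type*} [MetricSpace E] [MeasurableSpace E]

lemma measure_eq_of_le_of_univ_le {μ ν : Measure E} [IsFiniteMeasure ν]
    (h : μ ≤ ν) (h2 : ν univ ≤ μ univ) : μ = ν := by
  ext s hs
  refine le_antisymm (Measure.le_iff'.mp h s) ?_
  have hμ : μ s + μ sᶜ = μ univ := measure_add_measure_compl hs
  have hν : ν s + ν sᶜ = ν univ := measure_add_measure_compl hs
  have hcne : ν sᶜ ≠ ⊤ := (measure_lt_top ν _).ne
  have key : ν s + ν sᶜ ≤ μ s + ν sᶜ := by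
    calc ν s + ν sᶜ = ν univ := hν
    _ ≤ μ univ := h2
    _ = μ s + μ sᶜ := hμ.symm
    _ ≤ μ s + ν sᶜ := add_le_add_right (Measure.le_iff'.mp h sᶜ) _
  exact (ENNReal.add_le_add_iff_right hcne).mp key

variable [BorelSpace E]

lemma subsingleton_of_h1_zero {S : Set E} (hS : IsPreconnected S) (h : μH[1] S = 0) :
    S.Subsingleton := by
  intro x hx y hy
  by_contra hne
  have himg : μH[1] ((dist x) '' S) ≤ μH[1] S := by
    have := (LipschitzWith.dist_right x).hausdorffMeasure_image_le (d := 1) one_pos.le S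
    simpa using this
  have hconn : IsPreconnected ((dist x) '' S) :=
    hS.image _ (Continuous.continuousOn (continuous_const.dist continuous_id))
  have hIcc : Icc (0 : ℝ) (dist x y) ⊆ (dist x) '' S := by
    have h0 : (0 : ℝ) ∈ (dist x) '' S := ⟨x, hx, dist_self x⟩
    have h1 : dist x y ∈ (dist x) '' S := ⟨y, hy, rfl⟩
    exact hconn.Icc_subset h0 h1
  have hpos : 0 < μH[1] (Icc (0 : ℝ) (dist x y)) := by
    rw [MeasureTheory.hausdorffMeasure_real, Real.volume_Icc]
    simp only [sub_zero]
    exact ENNReal.ofReal_pos.mpr (dist_pos.mpr hne)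
  have : μH[1] (Icc (0 : ℝ) (dist x y)) ≤ μH[1] S :=
    le_trans (measure_mono hIcc) himg
  rw [h] at this
  exact absurd (le_antisymm this zero_le) hpos.ne'

end Aux2

/-- if `L(ν) < ∞` then `H¹(supp ν) ≤ L(ν)`, with equality iff `ν` is a Dirac
mass, or `H¹(supp ν) > 0` and `ν` is the normalized `H¹` measure on its support. -/
theorem stmt_7 {d : ℕ} (ν : Measure (EuclideanSpace ℝ (Fin d))) [IsProbabilityMeasure ν]
    (hfin : lengthF ν < ⊤) :
    μH[1] (msupport ν) ≤ lengthF ν ∧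
    (μH[1] (msupport ν) = lengthF ν ↔
      (∃ x, ν = Measure.dirac x) ∨
      (0 < μH[1] (msupport ν) ∧
        ν = (μH[1] (msupport ν))⁻¹ •
          (μH[1] : Measure (EuclideanSpace ℝ (Fin d))).restrict (msupport ν))) := by
  classical
  set E := EuclideanSpace ℝ (Fin d)
  set S := msupport ν with hS
  set A := {α : ℝ≥0∞ | (μH[1] : Measure E).restrict S ≤ α • ν} with hA
  have hconn : IsConnected S := by
    by_contra hc
    rw [lengthF, if_neg hc] at hfin
    exact absurd hfin (lt_irrefl _)
  have hlen : lengthF ν = sInf A := by rw [lengthF, if_pos hconn]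
  have hub : ∀ α ∈ A, μH[1] S ≤ α := by
    intro α hα
    calc μH[1] S = ((μH[1] : Measure E).restrict S) univ := (Measure.restrict_apply_univ S).symm
      _ ≤ (α • ν) univ := Measure.le_iff'.mp hα univ
      _ = α := by simp [measure_univ]
  have part1 : μH[1] S ≤ sInf A := le_sInf hub
  have hinf_top : sInf A ≠ ⊤ := by rw [← hlen]; exact hfin.ne
  have hmem : sInf A ∈ A := by
    rw [hA, mem_setOf_eq, Measure.le_iff]
    intro s hs
    rw [Measure.smul_apply, smul_eq_mul]
    refine ENNReal.le_of_forall_pos_le_add fun ε hε _ => ?_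
    have hlt : sInf A < sInf A + ε :=
      ENNReal.lt_add_right hinf_top (by exact_mod_cast hε.ne')
    obtain ⟨α, hαA, hαlt⟩ := sInf_lt_iff.mp hlt
    calc ((μH[1] : Measure E).restrict S) s ≤ (α • ν) s := Measure.le_iff'.mp hαA s
      _ = α * ν s := by rw [Measure.smul_apply, smul_eq_mul]
      _ ≤ (sInf A + ε) * ν s := mul_le_mul_left hαlt.le _
      _ = sInf A * ν s + ε * ν s := add_mul _ _ _
      _ ≤ sInf A * ν s + ε * 1 := by gcongr; exact prob_le_one
      _ = sInf A * ν s + ε := by rw [mul_one]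
  refine ⟨hlen ▸ part1, ?_⟩
  constructor
  · intro heq
    rw [hlen] at heq
    by_cases h0 : μH[1] S = 0
    · -- Dirac case
      left
      have hsub : S.Subsingleton := subsingleton_of_h1_zero hconn.isPreconnected h0
      obtain ⟨x, hx⟩ := hconn.nonempty
      have hSx : S = {x} := hsub.eq_singleton_of_mem hx
      refine ⟨x, ?_⟩
      have hcompl : ν ({x}ᶜ) = 0 := by
        rw [← hSx]; exact compl_msupport_null ν
      have hx1 : ν {x} = 1 := by
        have := measure_add_measure_compl (μ := ν) (measurableSet_singleton x)
        rw [hcompl, add_zero, measure_univ] at this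
        exact this
      ext s hs
      rw [Measure.dirac_apply' x hs]
      have hdiff : ν (s \ {x}) = 0 :=
        measure_mono_null (diff_subset_compl s {x}) hcompl
      have hsplit : ν (s ∩ {x}) + ν (s \ {x}) = ν s :=
        measure_inter_add_diff s (measurableSet_singleton x)
      rw [hdiff, add_zero] at hsplit
      by_cases hxs : x ∈ s
      · rw [Set.indicator_of_mem hxs, ← hsplit,
          Set.inter_eq_self_of_subset_right (singleton_subset_iff.mpr hxs), hx1]
        rfl
      · rw [Set.indicator_of_notMem hxs, ← hsplit]
        have : s ∩ {x} = ∅ := by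
          ext z; simp only [mem_inter_iff, mem_singleton_iff, mem_empty_iff_false, iff_false]
          rintro ⟨hz, rfl⟩; exact hxs hz
        rw [this, measure_empty]
    · -- normalized case
      right
      have hL0 : μH[1] S ≠ 0 := h0
      have hLtop : μH[1] S ≠ ⊤ := heq ▸ hinf_top
      refine ⟨pos_iff_ne_zero.mpr h0, ?_⟩
      have hle : (μH[1] S)⁻¹ • (μH[1] : Measure E).restrict S ≤ ν := by
        rw [Measure.le_iff']
        intro s
        rw [Measure.smul_apply, smul_eq_mul]
        have h1 : ((μH[1] : Measure E).restrict S) s ≤ μH[1] S * ν s := by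
          have := Measure.le_iff'.mp hmem s
          rwa [Measure.smul_apply, smul_eq_mul, ← heq] at this
        calc (μH[1] S)⁻¹ * ((μH[1] : Measure E).restrict S) s
            ≤ (μH[1] S)⁻¹ * (μH[1] S * ν s) := mul_le_mul_right h1 _
          _ = ((μH[1] S)⁻¹ * μH[1] S) * ν s := (mul_assoc _ _ _).symm
          _ = ν s := by rw [ENNReal.inv_mul_cancel hL0 hLtop, one_mul]
      have huniv : ν univ ≤ ((μH[1] S)⁻¹ • (μH[1] : Measure E).restrict S) univ := by
        rw [measure_univ, Measure.smul_apply, smul_eq_mul, Measure.restrict_apply_univ,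
          ENNReal.inv_mul_cancel hL0 hLtop]
      exact (measure_eq_of_le_of_univ_le hle huniv).symm
  · rintro (⟨x, rfl⟩ | ⟨hpos, hν⟩)
    · have hSx : S = {x} := msupport_dirac x
      haveI : NoAtoms (μH[1] : Measure E) := Measure.noAtoms_hausdorff E one_pos
      have h1 : μH[1] S = 0 := by rw [hSx]; exact NullSingletonClass.measure_singleton (self := this) x
      have h2 : (0 : ℝ≥0∞) ∈ A := by
        rw [hA, mem_setOf_eq, Measure.restrict_eq_zero.mpr h1]
        exact Measure.zero_le _
      rw [h1, hlen]
      exact (le_antisymm (sInf_le h2) zero_le).symm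
    · have hL0 : μH[1] S ≠ 0 := hpos.ne'
      have hLtop : μH[1] S ≠ ⊤ := (lt_of_le_of_lt part1 (hlen ▸ hfin)).ne
      rw [hlen]
      refine le_antisymm part1 (sInf_le ?_)
      show (μH[1] : Measure E).restrict S ≤ (μH[1] S) • ν
      rw [hν, smul_smul, ENNReal.mul_inv_cancel hL0 hLtop, one_smul]


end
end

section
/- Let ν minimize E(ν) = W_p^p(ρ_0, ν) + Λ·L(ν) over probability measures, with Λ > 0. Then H^1(supp ν) ≤ (1/Λ)·W_p^p(ρ_0, δ_m) where m is any p-mean of ρ_0 (a minimizer of y ↦ ∫|x−y|^p dρ_0(x)). -/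
open MeasureTheory Metric Filter Set
open scoped ENNReal NNReal Topology

noncomputable section

lemma isClosed_msupport {E : Type*} [MetricSpace E] [MeasurableSpace E] (ν : Measure E) :
    IsClosed (msupport ν) := by
  rw [← isOpen_compl_iff, isOpen_iff_forall_mem_open]
  intro x hx
  simp only [msupport, mem_compl_iff, mem_setOf_eq, not_forall, not_lt, nonpos_iff_eq_zero] at hx
  obtain ⟨r, hr, h0⟩ := hx
  refine ⟨ball x r, fun y hy => ?_, isOpen_ball, mem_ball_self hr⟩
  simp only [msupport, mem_compl_iff, mem_setOf_eq, not_forall, not_lt, nonpos_iff_eq_zero]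
  exact ⟨r - dist y x, by simpa [sub_pos] using hy, measure_mono_null
    (fun z hz => by simp only [mem_ball] at *; linarith [dist_triangle z y x]) h0⟩

lemma msupport_dirac_s13 {E : Type*} [MetricSpace E] [MeasurableSpace E] [BorelSpace E] (m : E) :
    msupport (Measure.dirac m) = {m} := by
  ext x
  simp only [msupport, mem_setOf_eq, mem_singleton_iff]
  constructor
  · intro h
    by_contra hne
    have hd : 0 < dist x m := dist_pos.mpr fun e => hne e
    have := h (dist x m) hd
    rw [Measure.dirac_apply' _ measurableSet_ball] at this
    rw [dist_comm] at this
    simp at this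
  · rintro rfl r hr
    rw [Measure.dirac_apply' _ measurableSet_ball]
    simp [mem_ball, hr]

lemma lengthF_dirac {E : Type*} [MetricSpace E] [MeasurableSpace E] [BorelSpace E] (m : E) :
    lengthF (Measure.dirac m) = 0 := by
  haveI : NullSingletonClass (μH[1] : Measure E) := Measure.noAtoms_hausdorff E one_pos
  unfold lengthF
  rw [msupport_dirac_s13, if_pos isConnected_singleton]
  refine le_antisymm (sInf_le ?_) zero_le
  rw [mem_setOf_eq, Measure.restrict_eq_zero.mpr (measure_singleton m), zero_smul]

lemma hausdorff_le_lengthF {E : Type*} [MetricSpace E] [MeasurableSpace E] [BorelSpace E]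
    (ν : Measure E) [IsProbabilityMeasure ν] :
    μH[1] (msupport ν) ≤ lengthF ν := by
  unfold lengthF
  split
  · refine le_sInf fun α hα => ?_
    calc μH[1] (msupport ν) = (μH[1] : Measure E).restrict (msupport ν) (msupport ν) :=
          (Measure.restrict_apply_self _ _).symm
      _ ≤ (α • ν) (msupport ν) :=
          Measure.le_iff'.mp hα (msupport ν)
      _ = α * ν (msupport ν) := by simp [Measure.smul_apply, smul_eq_mul]
      _ ≤ α * 1 := mul_le_mul_right prob_le_one α
      _ = α := mul_one α
  · exact le_top


/-- a minimizer `ν` of `E(ν) = W_p^p(ρ₀,ν) + Λ L(ν)` satisfies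
`H¹(supp ν) ≤ (1/Λ) W_p^p(ρ₀, δ_m)` for any p-mean `m` of `ρ₀`. -/
theorem stmt_13 {d : ℕ} (p : ℝ) (hp : 1 ≤ p) (Λ : ℝ) (hΛ : 0 < Λ)
    (ρ₀ ν : Measure (EuclideanSpace ℝ (Fin d)))
    [IsProbabilityMeasure ρ₀] [IsProbabilityMeasure ν]
    (hmom : ∫⁻ x, (‖x‖₊ : ℝ≥0∞) ^ p ∂ρ₀ < ⊤)
    (hmin : ∀ ν' : Measure (EuclideanSpace ℝ (Fin d)), IsProbabilityMeasure ν' →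
      energyF p Λ ρ₀ ν ≤ energyF p Λ ρ₀ ν')
    (m : EuclideanSpace ℝ (Fin d))
    (hm : ∀ y : EuclideanSpace ℝ (Fin d),
      ∫⁻ x, edist x m ^ p ∂ρ₀ ≤ ∫⁻ x, edist x y ^ p ∂ρ₀) :
    μH[1] (msupport ν) ≤ (ENNReal.ofReal Λ)⁻¹ * Wpp p ρ₀ (Measure.dirac m) := by
  have hΛ0 : ENNReal.ofReal Λ ≠ 0 := by simp [ENNReal.ofReal_eq_zero, not_le, hΛ]
  have hΛt : ENNReal.ofReal Λ ≠ ⊤ := ENNReal.ofReal_ne_top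
  have hE := hmin (Measure.dirac m) (by infer_instance)
  rw [energyF, energyF, lengthF_dirac, mul_zero, add_zero] at hE
  have h1 : ENNReal.ofReal Λ * lengthF ν ≤ Wpp p ρ₀ (Measure.dirac m) :=
    le_trans le_add_self hE
  calc μH[1] (msupport ν) ≤ lengthF ν := hausdorff_le_lengthF ν
    _ = (ENNReal.ofReal Λ)⁻¹ * (ENNReal.ofReal Λ * lengthF ν) := by
        rw [← mul_assoc, ENNReal.inv_mul_cancel hΛ0 hΛt, one_mul]
    _ ≤ _ := mul_le_mul_right h1 _

end
end

section
/- Let Λ, Λ' > 0 with Λ' > Λ, and suppose a Dirac mass δ_{x_0} minimizes E_Λ(ν) = W_p^p(ρ_0, ν) + Λ·L(ν). Then every minimizer of E_{Λ'} is a Dirac mass; moreover if p > 1, δ_{x_0} is the unique minimizer of E_{Λ'}. -/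
open MeasureTheory Metric Filter Set
open scoped ENNReal NNReal Topology

noncomputable section

/-! ### Auxiliary lemmas -/

variable {d : ℕ}

lemma msupport_dirac_s16 (x : EuclideanSpace ℝ (Fin d)) :
    msupport (Measure.dirac x) = {x} := by
  ext z
  simp only [msupport, mem_setOf_eq, mem_singleton_iff]
  constructor
  · intro h
    by_contra hzx
    have hr : (0:ℝ) < dist x z := dist_pos.2 (Ne.symm hzx)
    have := h (dist x z) hr
    rw [Measure.dirac_apply' _ measurableSet_ball] at this
    simp [Set.indicator, mem_ball, lt_irrefl] at this
  · rintro rfl r hr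
    rw [Measure.dirac_apply' _ measurableSet_ball]
    simp [Set.indicator, mem_ball, hr]

lemma lengthF_dirac_s16 (x : EuclideanSpace ℝ (Fin d)) :
    lengthF (Measure.dirac x) = 0 := by
  classical
  rw [lengthF, if_pos (by rw [msupport_dirac_s16]; exact isConnected_singleton)]
  have h0 : (0:ℝ≥0∞) ∈ {α : ℝ≥0∞ |
      (μH[1] : Measure (EuclideanSpace ℝ (Fin d))).restrict (msupport (Measure.dirac x))
        ≤ α • Measure.dirac x} := by
    have := MeasureTheory.Measure.noAtoms_hausdorff (EuclideanSpace ℝ (Fin d)) one_pos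
    rw [msupport_dirac_s16]
    have : (μH[1] : Measure (EuclideanSpace ℝ (Fin d))).restrict {x} = 0 := by
      rw [Measure.restrict_eq_zero]
      exact measure_singleton x
    rw [this]
    simp
  exact le_antisymm (sInf_le h0) zero_le

lemma Wpp_dirac (p : ℝ) (ρ₀ : Measure (EuclideanSpace ℝ (Fin d))) [IsProbabilityMeasure ρ₀]
    (y : EuclideanSpace ℝ (Fin d)) :
    Wpp p ρ₀ (Measure.dirac y) = ∫⁻ x, edist x y ^ p ∂ρ₀ := by
  have hmeas : Measurable fun x : EuclideanSpace ℝ (Fin d) => edist x y ^ p :=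
    (measurable_id.edist measurable_const).pow measurable_const
  apply le_antisymm
  · -- use the coupling ρ₀.map (fun x => (x, y))
    have hf : Measurable fun x : EuclideanSpace ℝ (Fin d) => (x, y) :=
      measurable_id.prodMk measurable_const
    refine iInf_le_of_le (ρ₀.map fun x => (x, y)) (iInf_le_of_le ⟨?_, ?_⟩ ?_)
    · rw [Measure.map_map measurable_fst hf]
      exact Measure.map_id
    · rw [Measure.map_map measurable_snd hf]
      show ρ₀.map (fun _ => y) = _
      rw [Measure.map_const]
      simp
    · rw [lintegral_map (by exact (measurable_fst.edist measurable_snd).pow measurable_const) hf]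
  · refine le_iInf fun γ => le_iInf fun hγ => ?_
    have hae : ∀ᵐ z ∂γ, z.2 = y := by
      have h1 : γ (Prod.snd ⁻¹' {y}ᶜ) = 0 := by
        have := hγ.2
        have h2 : (γ.map Prod.snd) ({y}ᶜ) = 0 := by
          rw [this, Measure.dirac_apply' _ (measurableSet_singleton y).compl]
          simp
        rwa [Measure.map_apply measurable_snd (measurableSet_singleton y).compl] at h2
      filter_upwards [measure_eq_zero_iff_ae_notMem.1 h1] with z hz
      simpa using hz
    have : ∫⁻ z, edist z.1 z.2 ^ p ∂γ = ∫⁻ z, edist z.1 y ^ p ∂γ := by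
      apply lintegral_congr_ae
      filter_upwards [hae] with z hz
      rw [hz]
    rw [this, ← hγ.1, lintegral_map hmeas measurable_fst]

lemma moment_bound {p : ℝ} (hp : 1 ≤ p) (ρ₀ : Measure (EuclideanSpace ℝ (Fin d)))
    [IsProbabilityMeasure ρ₀]
    (hmom : ∫⁻ x, (‖x‖₊ : ℝ≥0∞) ^ p ∂ρ₀ < ⊤) (y : EuclideanSpace ℝ (Fin d)) :
    ∫⁻ x, edist x y ^ p ∂ρ₀ < ⊤ := by
  have hp0 : (0:ℝ) ≤ p := le_trans zero_le_one hp
  have hb : ∀ x : EuclideanSpace ℝ (Fin d),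
      edist x y ^ p ≤ 2 ^ p * ((‖x‖₊ : ℝ≥0∞) ^ p + (‖y‖₊ : ℝ≥0∞) ^ p) := by
    intro x
    have h1 : edist x y ≤ (‖x‖₊ : ℝ≥0∞) + (‖y‖₊ : ℝ≥0∞) := by
      rw [edist_nndist, nndist_eq_nnnorm]
      calc (‖x - y‖₊ : ℝ≥0∞) ≤ (‖x‖₊ + ‖y‖₊ : ℝ≥0) := by
            exact_mod_cast ENNReal.coe_le_coe.2 (nnnorm_sub_le x y)
        _ = (‖x‖₊ : ℝ≥0∞) + (‖y‖₊ : ℝ≥0∞) := by push_cast; ring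
    calc edist x y ^ p ≤ ((‖x‖₊ : ℝ≥0∞) + (‖y‖₊ : ℝ≥0∞)) ^ p :=
          ENNReal.rpow_le_rpow h1 hp0
      _ ≤ (2 * max (‖x‖₊ : ℝ≥0∞) (‖y‖₊ : ℝ≥0∞)) ^ p := by
          apply ENNReal.rpow_le_rpow _ hp0
          rw [two_mul]
          exact add_le_add (le_max_left _ _) (le_max_right _ _)
      _ = 2 ^ p * max (‖x‖₊ : ℝ≥0∞) (‖y‖₊ : ℝ≥0∞) ^ p := ENNReal.mul_rpow_of_nonneg _ _ hp0
      _ ≤ 2 ^ p * ((‖x‖₊ : ℝ≥0∞) ^ p + (‖y‖₊ : ℝ≥0∞) ^ p) := by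
          gcongr
          rcases max_cases ((‖x‖₊ : ℝ≥0∞)) ((‖y‖₊ : ℝ≥0∞)) with ⟨h, _⟩ | ⟨h, _⟩ <;> rw [h]
          · exact le_add_right le_rfl
          · exact le_add_left le_rfl
  calc ∫⁻ x, edist x y ^ p ∂ρ₀
      ≤ ∫⁻ x, 2 ^ p * ((‖x‖₊ : ℝ≥0∞) ^ p + (‖y‖₊ : ℝ≥0∞) ^ p) ∂ρ₀ := lintegral_mono hb
    _ = 2 ^ p * ((∫⁻ x, (‖x‖₊ : ℝ≥0∞) ^ p ∂ρ₀) + (‖y‖₊ : ℝ≥0∞) ^ p) := by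
        rw [lintegral_const_mul _ (f := fun x : EuclideanSpace ℝ (Fin d) =>
            (‖x‖₊ : ℝ≥0∞) ^ p + (‖y‖₊ : ℝ≥0∞) ^ p) ((measurable_nnnorm.coe_nnreal_ennreal.pow
          measurable_const).add measurable_const),
          lintegral_add_right _ measurable_const, lintegral_const]
        simp
    _ < ⊤ := by
        apply ENNReal.mul_lt_top
        · exact ENNReal.rpow_lt_top_of_nonneg hp0 ENNReal.ofNat_ne_top
        · exact ENNReal.add_lt_top.2 ⟨hmom, ENNReal.rpow_lt_top_of_nonneg hp0
            ENNReal.coe_ne_top⟩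

lemma dirac_of_lengthF_zero (ν : Measure (EuclideanSpace ℝ (Fin d)))
    [IsProbabilityMeasure ν] (h : lengthF ν = 0) : ∃ y, ν = Measure.dirac y := by
  classical
  set S := msupport ν with hS
  have hconn : IsConnected S := by
    by_contra hc
    rw [lengthF, if_neg hc] at h
    exact ENNReal.top_ne_zero h
  rw [lengthF, if_pos hconn] at h
  -- μH[1] S = 0
  have hH : (μH[1] : Measure (EuclideanSpace ℝ (Fin d))) S = 0 := by
    have hlb : (μH[1] : Measure (EuclideanSpace ℝ (Fin d))) S ≤
        sInf {α : ℝ≥0∞ | (μH[1] : Measure (EuclideanSpace ℝ (Fin d))).restrict S ≤ α • ν} := by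
      apply le_sInf
      intro α hα
      calc (μH[1] : Measure (EuclideanSpace ℝ (Fin d))) S
          = (μH[1] : Measure (EuclideanSpace ℝ (Fin d))).restrict S univ := by
            rw [Measure.restrict_apply_univ]
        _ ≤ (α • ν) univ := hα univ
        _ = α := by simp
    rw [h] at hlb
    exact le_antisymm hlb zero_le
  -- S is a subsingleton
  have hsub : S.Subsingleton := by
    intro a ha b hb
    by_contra hab
    have hf : LipschitzWith 1 (dist · a) := LipschitzWith.dist_left a
    have himg : (μH[1] : Measure ℝ) ((dist · a) '' S) ≤ μH[1] S := by
      simpa using hf.hausdorffMeasure_image_le zero_le_one S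
    rw [hH] at himg
    have hIcc : Icc (0 : ℝ) (dist b a) ⊆ (dist · a) '' S := by
      have h0 : dist a a = 0 := dist_self a
      have := hconn.isPreconnected.intermediate_value ha hb
        (hf.continuous.continuousOn)
      rw [h0] at this
      exact this
    have hvol : (μH[1] : Measure ℝ) (Icc (0:ℝ) (dist b a)) = ENNReal.ofReal (dist b a) := by
      rw [MeasureTheory.hausdorffMeasure_real, Real.volume_Icc, sub_zero]
    have hpos : (0:ℝ≥0∞) < ENNReal.ofReal (dist b a) := by
      rw [ENNReal.ofReal_pos]
      exact dist_pos.2 (fun e => hab e.symm) |>.trans_le le_rfl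
    have : ENNReal.ofReal (dist b a) ≤ 0 := by
      rw [← hvol]
      exact le_trans (measure_mono hIcc) himg
    exact absurd this (not_le.2 hpos)
  obtain ⟨y, hy⟩ := hconn.nonempty
  have hSy : S = {y} := (subsingleton_iff_singleton hy).1 hsub
  -- ν of the complement of S is zero
  have hcompl : ν Sᶜ = 0 := by
    apply measure_null_of_locally_null
    intro x hx
    simp only [hS, msupport, mem_compl_iff, mem_setOf_eq, not_forall] at hx
    obtain ⟨r, hr, hxr⟩ := hx
    exact ⟨ball x r, mem_nhdsWithin_of_mem_nhds (ball_mem_nhds x hr),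
      le_antisymm (not_lt.1 hxr) zero_le⟩
  rw [hSy] at hcompl
  have hνy : ν {y} = 1 := by
    have := measure_add_measure_compl (μ := ν) (measurableSet_singleton y)
    rw [hcompl, add_zero] at this
    simpa using this
  refine ⟨y, Measure.ext fun A hA => ?_⟩
  rw [Measure.dirac_apply' _ hA]
  by_cases hyA : y ∈ A
  · rw [Set.indicator_of_mem hyA]
    refine le_antisymm prob_le_one ?_
    calc (1:ℝ≥0∞) = ν {y} := hνy.symm
      _ ≤ ν A := measure_mono (singleton_subset_iff.2 hyA)
  · rw [Set.indicator_of_notMem hyA]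
    have : A ⊆ {y}ᶜ := fun z hz => by
      simp only [mem_compl_iff, mem_singleton_iff]
      rintro rfl; exact hyA hz
    exact le_antisymm (le_trans (measure_mono this) hcompl.le) zero_le

lemma real_strict_pt {p : ℝ} (hp : 1 < p) {u v : EuclideanSpace ℝ (Fin d)} (huv : u ≠ v) :
    (‖u + v‖ / 2) ^ p * 2 < ‖u‖ ^ p + ‖v‖ ^ p := by
  have hp0 : (0:ℝ) < p := lt_trans one_pos hp
  by_cases hab : ‖u‖ = ‖v‖
  · -- same norm, not same ray
    have hu0 : u ≠ 0 := by
      rintro rfl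
      have : ‖v‖ = 0 := by rw [← hab, norm_zero]
      exact huv (norm_eq_zero.1 this).symm
    have hv0 : v ≠ 0 := by
      rintro rfl
      exact hu0 (by rwa [norm_zero, norm_eq_zero] at hab)
    have hray : ¬ SameRay ℝ u v := by
      intro hr
      obtain ⟨a, b, ha, hb, hab2⟩ := hr.exists_pos hu0 hv0
      have : a * ‖u‖ = b * ‖v‖ := by
        have := congrArg norm hab2
        rwa [norm_smul, norm_smul, Real.norm_eq_abs, Real.norm_eq_abs,
          abs_of_pos ha, abs_of_pos hb] at this
      rw [hab] at this
      have hvpos : (0:ℝ) < ‖v‖ := norm_pos_iff.2 hv0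
      have hab3 : a = b := mul_right_cancel₀ hvpos.ne' this
      apply huv
      subst hab3
      exact smul_right_injective _ ha.ne' hab2
    have hlt : ‖u + v‖ < ‖u‖ + ‖v‖ := norm_add_lt_of_not_sameRay hray
    have h2 : ‖u + v‖ / 2 < ‖u‖ := by
      rw [← hab] at hlt
      linarith
    have h3 : (‖u + v‖ / 2) ^ p < ‖u‖ ^ p :=
      Real.rpow_lt_rpow (by positivity) h2 hp0
    have h4 : (0:ℝ) ≤ ‖u‖ ^ p := Real.rpow_nonneg (norm_nonneg u) p
    rw [← hab]
    nlinarith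
  · -- different norms: strict convexity of rpow
    have h1 : ‖u + v‖ / 2 ≤ (‖u‖ + ‖v‖) / 2 := by
      have := norm_add_le u v; linarith
    have h2 : (‖u + v‖ / 2) ^ p ≤ ((‖u‖ + ‖v‖) / 2) ^ p :=
      Real.rpow_le_rpow (by positivity) h1 hp0.le
    have h3 := (strictConvexOn_rpow hp).2 (Set.mem_Ici.2 (norm_nonneg u))
      (Set.mem_Ici.2 (norm_nonneg v)) hab (by norm_num : (0:ℝ) < 1/2)
      (by norm_num : (0:ℝ) < 1/2) (by norm_num)
    simp only [smul_eq_mul] at h3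
    have h4 : ((‖u‖ + ‖v‖) / 2) ^ p < (‖u‖ ^ p + ‖v‖ ^ p) / 2 := by
      have e : (1/2) * ‖u‖ + (1/2) * ‖v‖ = (‖u‖ + ‖v‖)/2 := by ring
      rw [e] at h3
      linarith
    nlinarith

lemma ennreal_strict_pt {p : ℝ} (hp : 1 < p) {y x₀ : EuclideanSpace ℝ (Fin d)}
    (hne : y ≠ x₀) (x : EuclideanSpace ℝ (Fin d)) :
    edist x (midpoint ℝ y x₀) ^ p * 2 < edist x y ^ p + edist x x₀ ^ p := by
  have hp0 : (0:ℝ) ≤ p := le_of_lt (lt_trans one_pos hp)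
  set u := x - y
  set v := x - x₀
  have huv : u ≠ v := fun h => hne (by simpa [u, v, sub_right_inj] using h)
  have hmid : dist x (midpoint ℝ y x₀) = ‖u + v‖ / 2 := by
    have e : x - midpoint ℝ y x₀ = (2:ℝ)⁻¹ • (u + v) := by
      rw [midpoint_eq_smul_add, invOf_eq_inv]
      simp only [u, v]
      module
    rw [dist_eq_norm, e, norm_smul]
    simp [div_eq_inv_mul]
  have hre := real_strict_pt hp huv
  rw [← hmid] at hre
  have hdy : dist x y = ‖u‖ := by rw [dist_eq_norm]
  have hdx : dist x x₀ = ‖v‖ := by rw [dist_eq_norm]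
  rw [← hdy, ← hdx] at hre
  -- transfer to ENNReal
  rw [edist_dist, edist_dist, edist_dist,
    ENNReal.ofReal_rpow_of_nonneg dist_nonneg hp0,
    ENNReal.ofReal_rpow_of_nonneg dist_nonneg hp0,
    ENNReal.ofReal_rpow_of_nonneg dist_nonneg hp0]
  calc ENNReal.ofReal (dist x (midpoint ℝ y x₀) ^ p) * 2
      = ENNReal.ofReal (dist x (midpoint ℝ y x₀) ^ p * 2) := by
        rw [ENNReal.ofReal_mul (Real.rpow_nonneg dist_nonneg p)]
        norm_num
    _ < ENNReal.ofReal (dist x y ^ p + dist x x₀ ^ p) := by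
        rw [ENNReal.ofReal_lt_ofReal_iff]
        · exact hre
        · have : (0:ℝ) ≤ dist x (midpoint ℝ y x₀) ^ p * 2 := by positivity
          linarith
    _ ≤ ENNReal.ofReal (dist x y ^ p) + ENNReal.ofReal (dist x x₀ ^ p) :=
        ENNReal.ofReal_add_le

theorem stmt_16 {d : ℕ} (p : ℝ) (hp : 1 ≤ p) (Λ Λ' : ℝ) (hΛ : 0 < Λ) (hΛ' : Λ < Λ')
    (ρ₀ : Measure (EuclideanSpace ℝ (Fin d))) [IsProbabilityMeasure ρ₀]
    (hmom : ∫⁻ x, (‖x‖₊ : ℝ≥0∞) ^ p ∂ρ₀ < ⊤)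
    (x₀ : EuclideanSpace ℝ (Fin d))
    (hmin : ∀ ν : Measure (EuclideanSpace ℝ (Fin d)), IsProbabilityMeasure ν →
      energyF p Λ ρ₀ (Measure.dirac x₀) ≤ energyF p Λ ρ₀ ν) :
    (∀ ν : Measure (EuclideanSpace ℝ (Fin d)), IsProbabilityMeasure ν →
      (∀ ν' : Measure (EuclideanSpace ℝ (Fin d)), IsProbabilityMeasure ν' →
        energyF p Λ' ρ₀ ν ≤ energyF p Λ' ρ₀ ν') →
      ∃ y, ν = Measure.dirac y) ∧
    (1 < p → ∀ ν : Measure (EuclideanSpace ℝ (Fin d)), IsProbabilityMeasure ν →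
      (∀ ν' : Measure (EuclideanSpace ℝ (Fin d)), IsProbabilityMeasure ν' →
        energyF p Λ' ρ₀ ν ≤ energyF p Λ' ρ₀ ν') →
      ν = Measure.dirac x₀) := by
  classical
  have hc₀top : (∫⁻ x, edist x x₀ ^ p ∂ρ₀) < ⊤ := moment_bound hp ρ₀ hmom x₀
  have hEd : ∀ (Λ'' : ℝ) (y : EuclideanSpace ℝ (Fin d)),
      energyF p Λ'' ρ₀ (Measure.dirac y) = ∫⁻ x, edist x y ^ p ∂ρ₀ := by
    intro Λ'' y
    rw [energyF, Wpp_dirac, lengthF_dirac_s16, mul_zero, add_zero]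
  have hΛ'0 : 0 < Λ' := lt_trans hΛ hΛ'
  have main : ∀ ν : Measure (EuclideanSpace ℝ (Fin d)), IsProbabilityMeasure ν →
      (∀ ν' : Measure (EuclideanSpace ℝ (Fin d)), IsProbabilityMeasure ν' →
        energyF p Λ' ρ₀ ν ≤ energyF p Λ' ρ₀ ν') →
      ∃ y, ν = Measure.dirac y := by
    intro ν hνp hν
    haveI := hνp
    apply dirac_of_lengthF_zero
    have h1 : Wpp p ρ₀ ν + ENNReal.ofReal Λ' * lengthF ν ≤ ∫⁻ x, edist x x₀ ^ p ∂ρ₀ := by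
      have := hν (Measure.dirac x₀) (by infer_instance)
      rwa [hEd, energyF] at this
    have h2 : (∫⁻ x, edist x x₀ ^ p ∂ρ₀) ≤ Wpp p ρ₀ ν + ENNReal.ofReal Λ * lengthF ν := by
      have := hmin ν hνp
      rwa [hEd, energyF] at this
    have hW : Wpp p ρ₀ ν ≠ ⊤ :=
      ne_top_of_le_ne_top hc₀top.ne (le_trans le_self_add h1)
    have h3 : ENNReal.ofReal Λ' * lengthF ν ≤ ENNReal.ofReal Λ * lengthF ν :=
      (ENNReal.add_le_add_iff_left hW).1 (le_trans h1 h2)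
    by_contra hL0
    have hLtop : lengthF ν ≠ ⊤ := by
      intro ht
      rw [ht, ENNReal.mul_top (ENNReal.ofReal_pos.2 hΛ'0).ne'] at h1
      have htop : (⊤:ℝ≥0∞) ≤ ∫⁻ x, edist x x₀ ^ p ∂ρ₀ := le_trans le_add_self h1
      exact hc₀top.ne (top_le_iff.1 htop)
    have h4 : ENNReal.ofReal Λ' ≤ ENNReal.ofReal Λ :=
      (ENNReal.mul_le_mul_iff_left hL0 hLtop).1 h3
    have h5 : Λ' ≤ Λ := by
      have := (ENNReal.ofReal_le_ofReal_iff hΛ.le).1 h4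
      linarith
    linarith
  refine ⟨main, ?_⟩
  intro hp1 ν hνp hν
  obtain ⟨y, rfl⟩ := main ν hνp hν
  by_contra hne'
  have hne : y ≠ x₀ := fun h => hne' (by rw [h])
  have hfy : (∫⁻ x, edist x y ^ p ∂ρ₀) ≤ ∫⁻ x, edist x x₀ ^ p ∂ρ₀ := by
    have := hν (Measure.dirac x₀) (by infer_instance)
    rwa [hEd, hEd] at this
  set m := midpoint ℝ y x₀ with hm
  have hfm : (∫⁻ x, edist x x₀ ^ p ∂ρ₀) ≤ ∫⁻ x, edist x m ^ p ∂ρ₀ := by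
    have := hmin (Measure.dirac m) (by infer_instance)
    rwa [hEd, hEd] at this
  have hmeas : ∀ z : EuclideanSpace ℝ (Fin d),
      Measurable fun x : EuclideanSpace ℝ (Fin d) => edist x z ^ p := fun z =>
    (measurable_id.edist measurable_const).pow measurable_const
  have hpt : ∀ x : EuclideanSpace ℝ (Fin d),
      edist x m ^ p * 2 < edist x y ^ p + edist x x₀ ^ p :=
    ennreal_strict_pt hp1 hne
  have hfi : (∫⁻ x, edist x m ^ p * 2 ∂ρ₀) ≠ ⊤ := by
    have hle : (∫⁻ x, edist x m ^ p * 2 ∂ρ₀) ≤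
        ∫⁻ x, (edist x y ^ p + edist x x₀ ^ p) ∂ρ₀ :=
      lintegral_mono fun x => (hpt x).le
    rw [lintegral_add_left (hmeas y)] at hle
    exact ne_top_of_le_ne_top
      (ENNReal.add_lt_top.2 ⟨lt_of_le_of_lt hfy hc₀top, hc₀top⟩).ne hle
  have hstrict := lintegral_strict_mono (μ := ρ₀) (g := fun x => edist x y ^ p + edist x x₀ ^ p) (IsProbabilityMeasure.ne_zero ρ₀)
      (((hmeas y).add (hmeas x₀)).aemeasurable) hfi (Filter.Eventually.of_forall hpt)
  rw [lintegral_add_left (hmeas y), lintegral_mul_const _ (hmeas m)] at hstrict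
  have hchain : (∫⁻ x, edist x m ^ p ∂ρ₀) * 2 < (∫⁻ x, edist x m ^ p ∂ρ₀) * 2 := by
    calc (∫⁻ x, edist x m ^ p ∂ρ₀) * 2
        < (∫⁻ x, edist x y ^ p ∂ρ₀) + ∫⁻ x, edist x x₀ ^ p ∂ρ₀ := hstrict
      _ ≤ (∫⁻ x, edist x x₀ ^ p ∂ρ₀) + ∫⁻ x, edist x x₀ ^ p ∂ρ₀ := add_le_add_left hfy _
      _ = (∫⁻ x, edist x x₀ ^ p ∂ρ₀) * 2 := (mul_two _).symm
      _ ≤ (∫⁻ x, edist x m ^ p ∂ρ₀) * 2 := mul_le_mul_left hfm 2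
  exact lt_irrefl _ hchain

end
end

section
/- For every ρ_0 ∈ P_p(ℝ^d), if for each Λ > 0, ν_Λ is any minimizer of E_Λ(ν) = W_p^p(ρ_0, ν) + Λ·L(ν), then W_p(ρ_0, ν_Λ) → 0 as Λ → 0⁺. -/
open MeasureTheory Metric Filter Set
open scoped ENNReal NNReal Topology

noncomputable section

namespace Stmt17Aux

lemma rpow_add_le {p : ℝ} (hp : 0 ≤ p) (a b : ℝ≥0∞) :
    (a + b) ^ p ≤ 2 ^ p * (a ^ p + b ^ p) := by
  calc (a + b) ^ p ≤ (2 * max a b) ^ p := by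
        apply ENNReal.rpow_le_rpow _ hp
        rw [two_mul]
        exact add_le_add (le_max_left a b) (le_max_right a b)
    _ = 2 ^ p * (max a b) ^ p := ENNReal.mul_rpow_of_nonneg _ _ hp
    _ ≤ 2 ^ p * (a ^ p + b ^ p) := by
        apply mul_le_mul_right
        rcases le_total a b with h | h
        · rw [max_eq_right h]; exact le_add_self
        · rw [max_eq_left h]; exact self_le_add_right _ _

lemma pos_vol_inter_Icc {U : Set ℝ} (hU : IsOpen U) {t : ℝ} (htU : t ∈ U)
    (ht : t ∈ Icc (0:ℝ) 1) : 0 < volume (U ∩ Icc (0:ℝ) 1) := by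
  obtain ⟨ε, hε, hball⟩ := Metric.isOpen_iff.1 hU t htU
  rcases lt_or_eq_of_le ht.2 with h1 | h1
  · have hlt : t < min 1 (t + ε) := lt_min h1 (by linarith)
    have hsub : Ioo t (min 1 (t + ε)) ⊆ U ∩ Icc 0 1 := by
      intro s hs
      refine ⟨hball ?_, le_trans ht.1 hs.1.le, le_of_lt (lt_of_lt_of_le hs.2 (min_le_left _ _))⟩
      rw [Real.ball_eq_Ioo]
      exact ⟨lt_of_le_of_lt (by linarith [hε]) hs.1, lt_of_lt_of_le hs.2 (min_le_right _ _)⟩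
    calc (0:ℝ≥0∞) < volume (Ioo t (min 1 (t + ε))) := by
          rw [Real.volume_Ioo]; exact ENNReal.ofReal_pos.2 (by linarith)
      _ ≤ volume (U ∩ Icc 0 1) := measure_mono hsub
  · subst h1
    have hlt : max 0 (1 - ε) < 1 := max_lt one_pos (by linarith)
    have hsub : Ioo (max 0 (1 - ε)) 1 ⊆ U ∩ Icc 0 1 := by
      intro s hs
      have h0s : (0:ℝ) ≤ s := le_of_lt (lt_of_le_of_lt (le_max_left _ _) hs.1)
      have hes : 1 - ε < s := lt_of_le_of_lt (le_max_right _ _) hs.1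
      refine ⟨hball ?_, h0s, hs.2.le⟩
      rw [Real.ball_eq_Ioo]
      exact ⟨by linarith, by linarith [hs.2]⟩
    calc (0:ℝ≥0∞) < volume (Ioo (max 0 (1 - ε)) 1) := by
          rw [Real.volume_Ioo]; exact ENNReal.ofReal_pos.2 (by linarith)
      _ ≤ _ := measure_mono hsub


lemma coord_abs_le_norm {d : ℕ} (x : EuclideanSpace ℝ (Fin d)) (i : Fin d) :
    |x i| ≤ ‖x‖ := by
  rw [EuclideanSpace.norm_eq]
  rw [Real.le_sqrt (abs_nonneg _) (Finset.sum_nonneg fun j _ => sq_nonneg _)]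
  calc |x i| ^ 2 = ‖x i‖ ^ 2 := by rw [Real.norm_eq_abs]
    _ ≤ ∑ j, ‖x j‖ ^ 2 :=
        Finset.single_le_sum (f := fun j => ‖x j‖ ^ 2) (fun j _ => sq_nonneg _)
          (Finset.mem_univ i)

lemma exists_rounding {d : ℕ} (R η : ℝ) (hR : 0 < R) (hη : 0 < η) :
    ∃ T : EuclideanSpace ℝ (Fin d) → EuclideanSpace ℝ (Fin d),
      Measurable T ∧ (Set.range T).Finite ∧
      (∀ x, ‖x‖ ≤ R → dist x (T x) ≤ η) ∧
      (∀ x, ¬ ‖x‖ ≤ R → T x = 0) ∧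
      (∀ x, ‖T x‖ ≤ R + η) := by
  set δ : ℝ := η / (Real.sqrt d + 1) with hδdef
  have hsd : (0:ℝ) ≤ Real.sqrt d := Real.sqrt_nonneg _
  have hδ : 0 < δ := div_pos hη (by linarith)
  set g : EuclideanSpace ℝ (Fin d) → EuclideanSpace ℝ (Fin d) :=
    fun x => WithLp.toLp 2 (fun i => δ * ⌊x i / δ⌋) with hgdef
  have hgm : Measurable g := by
    apply (PiLp.continuous_toLp (p := 2) (β := fun _ : Fin d => ℝ)).measurable.comp
    apply measurable_pi_lambda
    intro i
    have h0 : Measurable fun x : EuclideanSpace ℝ (Fin d) => x i := (EuclideanSpace.proj i).continuous.measurable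
    have h1 : Measurable fun x : EuclideanSpace ℝ (Fin d) => x i / δ := h0.div_const δ
    exact measurable_const.mul
      ((measurable_from_top (f := fun k : ℤ => (k:ℝ))).comp (Int.measurable_floor.comp h1))
  have hcoord : ∀ (x : EuclideanSpace ℝ (Fin d)) i, 0 ≤ x i - g x i ∧ x i - g x i ≤ δ := by
    intro x i
    have h1 : δ * ⌊x i / δ⌋ ≤ x i := by
      have := Int.floor_le (x i / δ)
      calc δ * ⌊x i / δ⌋ ≤ δ * (x i / δ) := by nlinarith
        _ = x i := by field_simp
    have h2 : x i - δ * ⌊x i / δ⌋ ≤ δ := by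
      have := Int.lt_floor_add_one (x i / δ)
      have h3 : x i / δ < ⌊x i / δ⌋ + 1 := this
      have h4 : δ * (x i / δ) = x i := by field_simp
      nlinarith [mul_lt_mul_of_pos_left h3 hδ, h4]
    exact ⟨by simpa [hgdef] using sub_nonneg.2 h1, by simpa [hgdef] using h2⟩
  have hdist : ∀ x, dist x (g x) ≤ η := by
    intro x
    have hle : dist x (g x) ≤ Real.sqrt (d * δ ^ 2) := by
      rw [dist_eq_norm, EuclideanSpace.norm_eq]
      apply Real.sqrt_le_sqrt
      calc ∑ i, ‖(x - g x) i‖ ^ 2 ≤ ∑ _i : Fin d, δ ^ 2 := by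
            apply Finset.sum_le_sum
            intro i _
            have h := hcoord x i
            rw [PiLp.sub_apply, Real.norm_eq_abs]
            rw [abs_of_nonneg h.1]
            nlinarith [h.1, h.2]
        _ = d * δ ^ 2 := by simp [Finset.sum_const, nsmul_eq_mul]
    have hsq : Real.sqrt (d * δ ^ 2) = Real.sqrt d * δ := by
      rw [Real.sqrt_mul (Nat.cast_nonneg d), Real.sqrt_sq hδ.le]
    calc dist x (g x) ≤ Real.sqrt d * δ := by rw [← hsq]; exact hle
      _ ≤ (Real.sqrt d + 1) * δ := by nlinarith
      _ = η := by rw [hδdef]; field_simp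
  refine ⟨fun x => if ‖x‖ ≤ R then g x else 0, ?_, ?_, ?_, ?_, ?_⟩
  · exact Measurable.ite (measurableSet_le measurable_norm measurable_const) hgm measurable_const
  · -- finite range
    set S : Set ℝ := (fun k : ℤ => δ * (k:ℝ)) '' (Set.Icc ⌊-R/δ⌋ ⌊R/δ⌋) with hSdef
    have hSfin : S.Finite := (Set.finite_Icc _ _).image _
    have hbig : {y : EuclideanSpace ℝ (Fin d) | ∀ i, y i ∈ S}.Finite := by
      have hpi : (Set.pi univ fun _ : Fin d => S).Finite := Set.Finite.pi fun _ => hSfin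
      have hmem : {y : EuclideanSpace ℝ (Fin d) | ∀ i, y i ∈ S} =
          (fun y : EuclideanSpace ℝ (Fin d) => (fun i => y i : Fin d → ℝ)) ⁻¹'
            (Set.pi univ fun _ => S) := by
        ext y; exact (Set.mem_univ_pi).symm
      rw [hmem]
      apply Set.Finite.preimage _ hpi
      intro a _ b _ h
      ext i; exact congrFun h i
    apply Set.Finite.subset (hbig.insert 0)
    rintro _ ⟨x, rfl⟩
    by_cases h : ‖x‖ ≤ R
    · right
      simp only [h, if_pos, mem_setOf_eq]
      intro i
      refine ⟨⌊x i / δ⌋, ⟨?_, ?_⟩, rfl⟩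
      · apply Int.floor_le_floor
        have : -R ≤ x i := by
          have := coord_abs_le_norm x i
          have := abs_le.1 (le_trans this h)
          linarith [this.1]
        gcongr
      · apply Int.floor_le_floor
        have : x i ≤ R := le_trans (le_abs_self _) (le_trans (coord_abs_le_norm x i) h)
        gcongr
    · left; simp [h]
  · intro x hx; simp only [if_pos hx]; exact hdist x
  · intro x hx; simp [hx]
  · intro x
    by_cases h : ‖x‖ ≤ R
    · simp only [if_pos h]
      calc ‖g x‖ = dist (g x) 0 := by rw [dist_zero_right]
        _ ≤ dist (g x) x + dist x 0 := dist_triangle _ _ _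
        _ = dist x (g x) + ‖x‖ := by rw [dist_comm, dist_zero_right]
        _ ≤ η + R := add_le_add (hdist x) h
        _ = R + η := add_comm _ _
    · simp only [if_neg h, norm_zero]
      positivity


variable {d : ℕ}

local notation "Eu" => EuclideanSpace ℝ (Fin d)

lemma exists_network_measure (A : Finset (EuclideanSpace ℝ (Fin d))) (h0A : 0 ∈ A)
    (μd : Measure (EuclideanSpace ℝ (Fin d))) [IsProbabilityMeasure μd]
    {θ : ℝ≥0∞} (hθ0 : 0 < θ) (hθ1 : θ ≤ 1) (hθtop : θ ≠ ⊤)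
    (hsupp : μd (⋃ a ∈ A, (fun t : ℝ => t • a) '' Icc (0:ℝ) 1)ᶜ = 0) :
    ∃ σ : Measure (EuclideanSpace ℝ (Fin d)), IsProbabilityMeasure σ ∧
      σ (⋃ a ∈ A, (fun t : ℝ => t • a) '' Icc (0:ℝ) 1)ᶜ = 0 ∧
      lengthF ((1-θ) • μd + θ • σ) < ⊤ := by
  set f : Eu → ℝ → Eu := fun a t => t • a with hfdef
  have hfc : ∀ a : Eu, Continuous (f a) := fun a => continuous_id.smul continuous_const
  set seg : Eu → Set Eu := fun a => f a '' Icc 0 1 with hsegdef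
  set SigS : Set Eu := ⋃ a ∈ A, seg a with hSdef
  -- basic facts about SigS
  have hseg_sub : ∀ a ∈ A, seg a ⊆ SigS := fun a ha => subset_biUnion_of_mem ha
  have h0seg : ∀ a : Eu, (0:Eu) ∈ seg a := fun a =>
    ⟨0, ⟨le_refl _, zero_le_one⟩, by simp [hfdef]⟩
  have hmem_seg : ∀ (a : Eu) (t : ℝ), t ∈ Icc (0:ℝ) 1 → f a t ∈ seg a :=
    fun a t ht => ⟨t, ht, rfl⟩
  have hSclosed : IsClosed SigS := by
    apply IsCompact.isClosed
    exact A.finite_toSet.isCompact_biUnion fun a _ => isCompact_Icc.image (hfc a)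
  have hSconn : IsConnected SigS := by
    refine ⟨⟨0, mem_biUnion h0A (h0seg 0)⟩, ?_⟩
    rw [hSdef]
    have heq : (⋃ a ∈ A, seg a) = ⋃₀ (seg '' (A : Set Eu)) := by
      rw [Set.sUnion_image]
      simp
    rw [heq]
    apply isPreconnected_sUnion (0:Eu)
    · rintro s ⟨a, _, rfl⟩; exact h0seg a
    · rintro s ⟨a, _, rfl⟩
      exact isPreconnected_Icc.image (f a) (hfc a).continuousOn
  -- the measures
  haveI : IsProbabilityMeasure ((volume : Measure ℝ).restrict (Icc 0 1)) :=
    ⟨by rw [Measure.restrict_apply_univ]; simp [Real.volume_Icc]⟩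
  set σa : Eu → Measure Eu := fun a => ((volume : Measure ℝ).restrict (Icc 0 1)).map (f a)
    with hσadef
  have hσa_prob : ∀ a, IsProbabilityMeasure (σa a) := fun a =>
    Measure.isProbabilityMeasure_map (hfc a).measurable.aemeasurable
  have hσa_apply : ∀ (a : Eu) (s : Set Eu), MeasurableSet s →
      σa a s = volume (f a ⁻¹' s ∩ Icc 0 1) := fun a s hs => by
    rw [hσadef]
    simp only []
    rw [Measure.map_apply (hfc a).measurable hs,
      Measure.restrict_apply ((hfc a).measurable hs)]
  set n : ℝ≥0∞ := (A.card : ℝ≥0∞) with hndef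
  have hn0 : n ≠ 0 := by
    simp only [hndef, ne_eq, Nat.cast_eq_zero, Finset.card_eq_zero]
    exact Finset.nonempty_iff_ne_empty.1 ⟨0, h0A⟩
  have hntop : n ≠ ⊤ := ENNReal.natCast_ne_top _
  set σ : Measure Eu := n⁻¹ • ∑ a ∈ A, σa a with hσdef
  have hσ_apply : ∀ s : Set Eu, σ s = n⁻¹ * ∑ a ∈ A, σa a s := fun s => by
    rw [hσdef, Measure.smul_apply, Measure.finset_sum_apply, smul_eq_mul]
  have hσ_prob : IsProbabilityMeasure σ := by
    constructor
    rw [hσ_apply]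
    have : ∀ a ∈ A, σa a univ = 1 := fun a _ => (hσa_prob a).measure_univ
    rw [Finset.sum_congr rfl this, Finset.sum_const, nsmul_eq_mul, mul_one,
      ENNReal.inv_mul_cancel hn0 hntop]
  refine ⟨σ, hσ_prob, ?_, ?_⟩
  · -- σ vanishes outside SigS
    rw [hσ_apply]
    have : ∀ a ∈ A, σa a SigSᶜ = 0 := by
      intro a ha
      rw [hσa_apply a _ hSclosed.measurableSet.compl]
      convert measure_empty
      · ext t
        simp only [mem_inter_iff, mem_preimage, mem_compl_iff, mem_empty_iff_false, iff_false,
          not_and]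
        intro h ht
        exact h (hseg_sub a ha (hmem_seg a t ht))
      · infer_instance
    rw [Finset.sum_congr rfl this]
    simp
  · -- lengthF bound
    set ν' : Measure Eu := (1-θ) • μd + θ • σ with hν'def
    have hν'_apply : ∀ s : Set Eu, ν' s = (1-θ) * μd s + θ * σ s := fun s => by
      rw [hν'def, Measure.add_apply, Measure.smul_apply, Measure.smul_apply,
        smul_eq_mul, smul_eq_mul]
    -- msupport ν' = SigS
    have hmsupp : msupport ν' = SigS := by
      apply subset_antisymm
      · intro x hx
        by_contra hxS
        obtain ⟨r, hr, hball⟩ := Metric.isOpen_iff.1 hSclosed.isOpen_compl x hxS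
        have h1 : ν' (ball x r) = 0 := by
          rw [hν'_apply]
          have hμd : μd (ball x r) = 0 := measure_mono_null hball hsupp
          have hσ0 : σ (ball x r) = 0 := by
            rw [hσ_apply]
            have : ∀ a ∈ A, σa a (ball x r) = 0 := by
              intro a ha
              rw [hσa_apply a _ measurableSet_ball]
              convert measure_empty
              · ext t
                simp only [mem_inter_iff, mem_preimage, mem_empty_iff_false, iff_false, not_and]
                intro h ht
                exact (hball h) (hseg_sub a ha (hmem_seg a t ht))
              · infer_instance
            rw [Finset.sum_congr rfl this]
            simp
          rw [hμd, hσ0, mul_zero, mul_zero, add_zero]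
        have := hx r hr
        rw [h1] at this
        exact lt_irrefl 0 this
      · rintro x hxS r hr
        simp only [hSdef, mem_iUnion] at hxS
        obtain ⟨a, ha, t, ht, hft⟩ := hxS
        have hσa_pos : 0 < σa a (ball x r) := by
          rw [hσa_apply a _ measurableSet_ball]
          apply pos_vol_inter_Icc (isOpen_ball.preimage (hfc a)) _ ht
          rw [mem_preimage, hft]
          exact mem_ball_self hr
        have hσ_pos : 0 < σ (ball x r) := by
          rw [hσ_apply]
          have hle : σa a (ball x r) ≤ ∑ a' ∈ A, σa a' (ball x r) :=
            Finset.single_le_sum (f := fun a' => σa a' (ball x r)) (fun _ _ => zero_le) ha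
          exact ENNReal.mul_pos (ENNReal.inv_ne_zero.2 hntop)
            (lt_of_lt_of_le hσa_pos hle).ne'
        calc (0:ℝ≥0∞) < θ * σ (ball x r) := ENNReal.mul_pos hθ0.ne' hσ_pos.ne'
          _ ≤ ν' (ball x r) := by rw [hν'_apply]; exact le_add_self
    -- the inequality
    set Kb : ℝ≥0∞ := ∑ a ∈ A, (‖a‖₊ : ℝ≥0∞) with hKbdef
    have hKbtop : Kb ≠ ⊤ := by
      rw [hKbdef]
      exact (ENNReal.sum_lt_top.mpr fun a _ => ENNReal.coe_lt_top).ne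
    set α : ℝ≥0∞ := Kb * n * θ⁻¹ with hαdef
    have hαtop : α < ⊤ := by
      rw [hαdef]
      exact ENNReal.mul_lt_top (ENNReal.mul_lt_top hKbtop.lt_top hntop.lt_top)
        (ENNReal.inv_lt_top.2 hθ0)
    have hσa_le : ∀ (a : Eu) (s : Set Eu), a ∈ A → σa a s ≤ n * σ s := by
      intro a s ha
      rw [hσ_apply, ← mul_assoc, ENNReal.mul_inv_cancel hn0 hntop, one_mul]
      exact Finset.single_le_sum (f := fun a => σa a s) (fun _ _ => zero_le) ha
    have hσ_le : ∀ s : Set Eu, σ s ≤ θ⁻¹ * ν' s := by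
      intro s
      have h1 : θ * σ s ≤ ν' s := by rw [hν'_apply]; exact le_add_self
      calc σ s = θ⁻¹ * (θ * σ s) := by
            rw [← mul_assoc, ENNReal.inv_mul_cancel hθ0.ne' hθtop, one_mul]
        _ ≤ θ⁻¹ * ν' s := mul_le_mul_right h1 _
    have hmem : (μH[1] : Measure (EuclideanSpace ℝ (Fin d))).restrict (msupport ν')
        ≤ α • ν' := by
      rw [hmsupp]
      rw [Measure.le_iff]
      intro s hs
      rw [Measure.restrict_apply hs, Measure.smul_apply, smul_eq_mul]
      have hsplit : s ∩ SigS = ⋃ a ∈ A, s ∩ seg a := by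
        rw [hSdef, Set.inter_iUnion₂]
      calc μH[1] (s ∩ SigS) ≤ ∑ a ∈ A, μH[1] (s ∩ seg a) := by
            rw [hsplit]; exact measure_biUnion_finset_le A _
        _ = ∑ a ∈ A, (‖a‖₊ : ℝ≥0∞) * σa a s := by
            apply Finset.sum_congr rfl
            intro a _
            have himg : s ∩ seg a = (fun r : ℝ => r • a) '' (f a ⁻¹' s ∩ Icc 0 1) := by
              rw [hsegdef]
              ext y
              constructor
              · rintro ⟨hys, t, ht, rfl⟩
                exact ⟨t, ⟨hys, ht⟩, rfl⟩
              · rintro ⟨t, ⟨hts, ht⟩, rfl⟩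
                exact ⟨hts, t, ht, rfl⟩
            rw [himg, hausdorffMeasure_smul_right_image, hausdorffMeasure_real,
              ENNReal.smul_def, smul_eq_mul, hσa_apply a s hs]
        _ ≤ ∑ a ∈ A, (‖a‖₊ : ℝ≥0∞) * (n * σ s) := by
            apply Finset.sum_le_sum
            intro a ha
            exact mul_le_mul_right (hσa_le a s ha) _
        _ = Kb * (n * σ s) := by rw [hKbdef, Finset.sum_mul]
        _ ≤ Kb * (n * (θ⁻¹ * ν' s)) := by
            apply mul_le_mul_right
            exact mul_le_mul_right (hσ_le s) _
        _ = α * ν' s := by rw [hαdef]; ring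
    have hconn : IsConnected (msupport ν') := by rw [hmsupp]; exact hSconn
    calc lengthF ν' = sInf {β : ℝ≥0∞ |
          (μH[1] : Measure (EuclideanSpace ℝ (Fin d))).restrict (msupport ν') ≤ β • ν'} := by
          unfold lengthF
          rw [if_pos hconn]
      _ ≤ α := sInf_le hmem
      _ < ⊤ := hαtop


lemma tail_small (p : ℝ) (ρ₀ : Measure (EuclideanSpace ℝ (Fin d)))
    [IsProbabilityMeasure ρ₀]
    (hmom : ∫⁻ x, (‖x‖₊ : ℝ≥0∞) ^ p ∂ρ₀ < ⊤) {c : ℝ≥0∞} (hc : 0 < c) :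
    ∃ R : ℝ, 0 < R ∧ ∫⁻ x in {x : EuclideanSpace ℝ (Fin d) | R < ‖x‖},
      (‖x‖₊ : ℝ≥0∞) ^ p ∂ρ₀ ≤ c := by
  have hF : Measurable fun x : Eu => ((‖x‖₊ : ℝ≥0∞)) ^ p :=
    ENNReal.continuous_rpow_const.measurable.comp measurable_nnnorm.coe_nnreal_ennreal
  set μf := ρ₀.withDensity (fun x => (‖x‖₊ : ℝ≥0∞) ^ p) with hμf
  have hA : ∀ R : ℝ, MeasurableSet {x : Eu | R < ‖x‖} := fun R =>
    measurableSet_lt measurable_const measurable_norm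
  have happly : ∀ R : ℝ, μf {x : Eu | R < ‖x‖}
      = ∫⁻ x in {x : Eu | R < ‖x‖}, (‖x‖₊ : ℝ≥0∞) ^ p ∂ρ₀ := fun R =>
    withDensity_apply _ (hA R)
  have hanti : Antitone (fun n : ℕ => {x : Eu | (n:ℝ) < ‖x‖}) := by
    intro m n hmn x hx
    have hcast : (m:ℝ) ≤ (n:ℝ) := Nat.cast_le.2 hmn
    exact lt_of_le_of_lt hcast hx
  have hempty : ⋂ n : ℕ, {x : Eu | (n:ℝ) < ‖x‖} = ∅ := by
    ext x
    simp only [mem_iInter, mem_setOf_eq, mem_empty_iff_false, iff_false, not_forall, not_lt]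
    obtain ⟨n, hn⟩ := exists_nat_ge ‖x‖
    exact ⟨n, hn⟩
  have huniv : μf univ = ∫⁻ x, (‖x‖₊ : ℝ≥0∞) ^ p ∂ρ₀ := by
    rw [hμf, withDensity_apply _ MeasurableSet.univ, Measure.restrict_univ]
  have hne : μf {x : Eu | ((0:ℕ):ℝ) < ‖x‖} ≠ ⊤ := by
    apply ne_of_lt
    calc μf {x : Eu | ((0:ℕ):ℝ) < ‖x‖} ≤ μf univ := measure_mono (subset_univ _)
      _ < ⊤ := by rw [huniv]; exact hmom
  have htend := tendsto_measure_iInter_atTop (μ := μf)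
    (s := fun n : ℕ => {x : Eu | (n:ℝ) < ‖x‖})
    (fun n => (hA (n:ℝ)).nullMeasurableSet) hanti ⟨0, hne⟩
  rw [hempty] at htend
  simp only [measure_empty] at htend
  obtain ⟨n, hn⟩ := (ENNReal.tendsto_nhds_zero.mp htend c hc).exists
  refine ⟨(n:ℝ) + 1, by positivity, ?_⟩
  calc ∫⁻ x in {x : Eu | (n:ℝ) + 1 < ‖x‖}, (‖x‖₊ : ℝ≥0∞) ^ p ∂ρ₀
      ≤ ∫⁻ x in {x : Eu | (n:ℝ) < ‖x‖}, (‖x‖₊ : ℝ≥0∞) ^ p ∂ρ₀ :=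
        lintegral_mono_set (fun x hx => by simp only [mem_setOf_eq] at hx ⊢; linarith)
    _ = μf {x : Eu | (n:ℝ) < ‖x‖} := (happly n).symm
    _ ≤ c := hn

lemma exists_competitor (p : ℝ) (hp : 1 ≤ p)
    (ρ₀ : Measure (EuclideanSpace ℝ (Fin d))) [IsProbabilityMeasure ρ₀]
    (hmom : ∫⁻ x, (‖x‖₊ : ℝ≥0∞) ^ p ∂ρ₀ < ⊤) {c : ℝ≥0∞} (hc : 0 < c) :
    ∃ ν' : Measure (EuclideanSpace ℝ (Fin d)),
      IsProbabilityMeasure ν' ∧ Wpp p ρ₀ ν' ≤ c ∧ lengthF ν' < ⊤ := by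
  classical
  have hp0 : (0:ℝ) < p := lt_of_lt_of_le one_pos hp
  have hc22 : (0:ℝ≥0∞) < c / 2 / 2 :=
    ENNReal.div_pos (ENNReal.div_pos hc.ne' ENNReal.ofNat_ne_top).ne' ENNReal.ofNat_ne_top
  obtain ⟨R, hR0, htail⟩ := tail_small p ρ₀ hmom hc22
  -- choose η
  have hmin_ne_top : min 1 (c/2/2) ≠ ⊤ :=
    ((min_le_left _ _).trans_lt ENNReal.one_lt_top).ne
  set m : ℝ≥0∞ := (min 1 (c/2/2)) ^ (1/p) with hm
  have hm0 : m ≠ 0 := (ENNReal.rpow_pos (lt_min one_pos hc22) hmin_ne_top).ne'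
  have hmtop : m ≠ ⊤ := ENNReal.rpow_ne_top_of_nonneg (by positivity) hmin_ne_top
  set η : ℝ := m.toReal with hηdef
  have hη0 : 0 < η := ENNReal.toReal_pos hm0 hmtop
  have hηpow : (ENNReal.ofReal η) ^ p ≤ c/2/2 := by
    rw [hηdef, ENNReal.ofReal_toReal hmtop, hm, ← ENNReal.rpow_mul,
      one_div_mul_cancel hp0.ne', ENNReal.rpow_one]
    exact min_le_right _ _
  obtain ⟨T, hTmeas, hTfin, hTclose, hTfar, hTbound⟩ := exists_rounding (d := d) R η hR0 hη0
  -- atoms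
  set A : Finset Eu := insert 0 hTfin.toFinset with hA
  have h0A : (0:Eu) ∈ A := Finset.mem_insert_self _ _
  have hTA : ∀ x, T x ∈ A := fun x => Finset.mem_insert_of_mem (hTfin.mem_toFinset.2 ⟨x, rfl⟩)
  have hAnorm : ∀ a ∈ A, ‖a‖ ≤ R + η := by
    intro a ha
    rcases Finset.mem_insert.1 ha with rfl | ha
    · rw [norm_zero]; positivity
    · obtain ⟨x, rfl⟩ := hTfin.mem_toFinset.1 ha
      exact hTbound x
  -- the network set
  set SigS : Set Eu := ⋃ a ∈ A, (fun t : ℝ => t • a) '' Icc (0:ℝ) 1 with hSdef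
  have hSmeas : MeasurableSet SigS := by
    apply IsClosed.measurableSet
    apply IsCompact.isClosed
    exact A.finite_toSet.isCompact_biUnion fun a _ =>
      isCompact_Icc.image (continuous_id.smul continuous_const)
  have hSnorm : ∀ y ∈ SigS, ‖y‖ ≤ R + η := by
    intro y hy
    simp only [hSdef, mem_iUnion] at hy
    obtain ⟨a, ha, t, ht, rfl⟩ := hy
    calc ‖t • a‖ = |t| * ‖a‖ := by rw [norm_smul, Real.norm_eq_abs]
      _ ≤ 1 * (R + η) := by
          apply mul_le_mul _ (hAnorm a ha) (norm_nonneg a) zero_le_one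
          rw [abs_of_nonneg ht.1]; exact ht.2
      _ = R + η := one_mul _
  -- constants
  set M : ℝ≥0∞ := ∫⁻ x, (‖x‖₊ : ℝ≥0∞) ^ p ∂ρ₀ with hM
  set K' : ℝ≥0∞ := ENNReal.ofReal (R + η) with hK'
  set Kc : ℝ≥0∞ := 2 ^ p * (M + K' ^ p) with hKc
  have hKctop : Kc ≠ ⊤ := by
    apply ENNReal.mul_ne_top (ENNReal.rpow_ne_top_of_nonneg hp0.le ENNReal.ofNat_ne_top)
    exact ENNReal.add_ne_top.2 ⟨hmom.ne,
      ENNReal.rpow_ne_top_of_nonneg hp0.le ENNReal.ofReal_ne_top⟩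
  set θ : ℝ≥0∞ := min 1 ((c/2) / (Kc + 1)) with hθdef
  have hθ0 : 0 < θ := lt_min one_pos
    (ENNReal.div_pos (ENNReal.div_pos hc.ne' ENNReal.ofNat_ne_top).ne'
      (by simp [hKctop]))
  have hθ1 : θ ≤ 1 := min_le_left _ _
  have hθtop : θ ≠ ⊤ := (hθ1.trans_lt ENNReal.one_lt_top).ne
  have hθKc : θ * Kc ≤ c/2 := by
    calc θ * Kc ≤ ((c/2) / (Kc + 1)) * (Kc + 1) :=
        mul_le_mul' (min_le_right _ _) le_self_add
      _ = c/2 := ENNReal.div_mul_cancel (by simp) (by simp [hKctop])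
  -- discrete measure
  set μd : Measure Eu := ρ₀.map T with hμd
  haveI : IsProbabilityMeasure μd := Measure.isProbabilityMeasure_map hTmeas.aemeasurable
  have hsupp : μd SigSᶜ = 0 := by
    rw [hμd, Measure.map_apply hTmeas hSmeas.compl]
    convert measure_empty
    · ext x
      simp only [mem_preimage, mem_compl_iff, mem_empty_iff_false, iff_false, not_not]
      exact mem_biUnion (hTA x) ⟨1, ⟨zero_le_one, le_refl _⟩, one_smul _ _⟩
    · infer_instance
  obtain ⟨σ, hσprob, hσout, hlen⟩ := exists_network_measure A h0A μd hθ0 hθ1 hθtop hsupp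
  haveI := hσprob
  set ν' : Measure Eu := (1-θ) • μd + θ • σ with hν'def
  haveI hν'prob : IsProbabilityMeasure ν' := by
    constructor
    rw [hν'def, Measure.add_apply, Measure.smul_apply, Measure.smul_apply, smul_eq_mul,
      smul_eq_mul, measure_univ, measure_univ, mul_one, mul_one, tsub_add_cancel_of_le hθ1]
  refine ⟨ν', hν'prob, ?_, hlen⟩
  -- Wasserstein bound via explicit coupling
  have hpair : Measurable fun x : Eu => (x, T x) := measurable_id.prodMk hTmeas
  set γ : Measure (Eu × Eu) :=
    (1-θ) • (ρ₀.map (fun x => (x, T x))) + θ • (ρ₀.prod σ) with hγdef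
  have hfst : γ.map Prod.fst = ρ₀ := by
    rw [hγdef, Measure.map_add _ _ measurable_fst, Measure.map_smul, Measure.map_smul,
      Measure.map_map measurable_fst hpair, Measure.map_fst_prod, measure_univ, one_smul]
    have h1 : (Prod.fst ∘ fun x : Eu => (x, T x)) = id := rfl
    rw [h1, Measure.map_id, ← add_smul, tsub_add_cancel_of_le hθ1, one_smul]
  have hsnd : γ.map Prod.snd = ν' := by
    rw [hγdef, Measure.map_add _ _ measurable_snd, Measure.map_smul, Measure.map_smul,
      Measure.map_map measurable_snd hpair, Measure.map_snd_prod, measure_univ, one_smul]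
    rfl
  have hC : Measurable fun z : Eu × Eu => edist z.1 z.2 ^ p :=
    ENNReal.continuous_rpow_const.measurable.comp measurable_edist
  have hWle : Wpp p ρ₀ ν' ≤ ∫⁻ z, edist z.1 z.2 ^ p ∂γ := iInf₂_le γ ⟨hfst, hsnd⟩
  -- cost of the map part
  have hE1 : ∫⁻ x, edist x (T x) ^ p ∂ρ₀ ≤ c/2/2 + c/2/2 := by
    have hsmeas : MeasurableSet {x : Eu | ‖x‖ ≤ R} :=
      measurableSet_le measurable_norm measurable_const
    rw [← lintegral_add_compl (fun x => edist x (T x) ^ p) hsmeas]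
    apply add_le_add
    · calc ∫⁻ x in {x : Eu | ‖x‖ ≤ R}, edist x (T x) ^ p ∂ρ₀
          ≤ ∫⁻ _x in {x : Eu | ‖x‖ ≤ R}, (ENNReal.ofReal η) ^ p ∂ρ₀ := by
            apply setLIntegral_mono measurable_const
            intro x hx
            apply ENNReal.rpow_le_rpow _ hp0.le
            rw [edist_dist]
            exact ENNReal.ofReal_le_ofReal (hTclose x hx)
        _ = (ENNReal.ofReal η) ^ p * ρ₀ {x : Eu | ‖x‖ ≤ R} := setLIntegral_const _ _
        _ ≤ (ENNReal.ofReal η) ^ p * 1 := mul_le_mul_right prob_le_one _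
        _ ≤ c/2/2 := by rw [mul_one]; exact hηpow
    · have hcompl : {x : Eu | ‖x‖ ≤ R}ᶜ = {x : Eu | R < ‖x‖} := by
        ext x; simp [not_le]
      rw [hcompl]
      calc ∫⁻ x in {x : Eu | R < ‖x‖}, edist x (T x) ^ p ∂ρ₀
          = ∫⁻ x in {x : Eu | R < ‖x‖}, (‖x‖₊ : ℝ≥0∞) ^ p ∂ρ₀ := by
            apply setLIntegral_congr_fun (hcompl ▸ hsmeas.compl)
            intro x hx
            simp only [hTfar x (not_le.2 hx), edist_zero_right, enorm_eq_nnnorm]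
        _ ≤ c/2/2 := htail
  -- cost of the product part
  have hGm : Measurable fun x : Eu => ((‖x‖₊ : ℝ≥0∞) + K') ^ p :=
    ENNReal.continuous_rpow_const.measurable.comp
      (measurable_nnnorm.coe_nnreal_ennreal.add_const K')
  have hprod : ∫⁻ z, edist z.1 z.2 ^ p ∂(ρ₀.prod σ) ≤ Kc := by
    have hbadset : {z : Eu × Eu | ¬ ‖z.2‖ ≤ R + η} = univ ×ˢ {y : Eu | ¬ ‖y‖ ≤ R + η} := by
      ext z; simp
    have hbad : (ρ₀.prod σ) {z : Eu × Eu | ¬ ‖z.2‖ ≤ R + η} = 0 := by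
      rw [hbadset, Measure.prod_prod]
      have hyset : {y : Eu | ¬ ‖y‖ ≤ R + η} ⊆ SigSᶜ := fun y hy hyS => hy (hSnorm y hyS)
      rw [measure_mono_null hyset hσout, mul_zero]
    have hae : ∀ᵐ z ∂(ρ₀.prod σ), edist z.1 z.2 ^ p ≤ ((‖z.1‖₊ : ℝ≥0∞) + K') ^ p := by
      rw [ae_iff]
      apply measure_mono_null _ hbad
      intro z hz
      simp only [mem_setOf_eq, not_le] at hz ⊢
      by_contra hcon
      push_neg at hcon
      refine absurd hz (not_lt.2 ?_)
      apply ENNReal.rpow_le_rpow _ hp0.le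
      calc edist z.1 z.2 ≤ edist z.1 0 + edist 0 z.2 := edist_triangle _ _ _
        _ = (‖z.1‖₊ : ℝ≥0∞) + (‖z.2‖₊ : ℝ≥0∞) := by
            rw [edist_zero_right, edist_comm, edist_zero_right, enorm_eq_nnnorm, enorm_eq_nnnorm]
        _ ≤ (‖z.1‖₊ : ℝ≥0∞) + K' := by
            apply add_le_add_right
            rw [← enorm_eq_nnnorm, ← ofReal_norm_eq_enorm, hK']
            exact ENNReal.ofReal_le_ofReal hcon
    calc ∫⁻ z, edist z.1 z.2 ^ p ∂(ρ₀.prod σ)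
        ≤ ∫⁻ z, ((‖z.1‖₊ : ℝ≥0∞) + K') ^ p ∂(ρ₀.prod σ) := lintegral_mono_ae hae
      _ = ∫⁻ x, ((‖x‖₊ : ℝ≥0∞) + K') ^ p ∂ρ₀ := by
          rw [← lintegral_map hGm measurable_fst, Measure.map_fst_prod, measure_univ, one_smul]
      _ ≤ ∫⁻ x, 2 ^ p * ((‖x‖₊ : ℝ≥0∞) ^ p + K' ^ p) ∂ρ₀ :=
          lintegral_mono fun x => rpow_add_le hp0.le _ _
      _ = 2 ^ p * (M + K' ^ p) := by
          rw [lintegral_const_mul' _ _ (ENNReal.rpow_ne_top_of_nonneg hp0.le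
              ENNReal.ofNat_ne_top),
            lintegral_add_right _ measurable_const, lintegral_const, measure_univ, mul_one, hM]
      _ = Kc := hKc.symm
  -- put it together
  calc Wpp p ρ₀ ν' ≤ ∫⁻ z, edist z.1 z.2 ^ p ∂γ := hWle
    _ = (1-θ) * ∫⁻ x, edist x (T x) ^ p ∂ρ₀
        + θ * ∫⁻ z, edist z.1 z.2 ^ p ∂(ρ₀.prod σ) := by
        rw [hγdef, lintegral_add_measure, lintegral_smul_measure, lintegral_smul_measure,
          lintegral_map hC hpair, smul_eq_mul, smul_eq_mul]
    _ ≤ c/2 + c/2 := by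
        apply add_le_add
        · calc (1-θ) * ∫⁻ x, edist x (T x) ^ p ∂ρ₀ ≤ 1 * (c/2/2 + c/2/2) :=
            mul_le_mul' tsub_le_self hE1
            _ = c/2 := by rw [one_mul, ENNReal.add_halves]
        · exact le_trans (mul_le_mul_right hprod θ) hθKc
    _ = c := ENNReal.add_halves c


end Stmt17Aux

/-- if for every `Λ > 0`, `ν Λ` is a minimizer of
`E_Λ(ν) = W_p^p(ρ₀,ν) + Λ L(ν)`, then `W_p(ρ₀, ν Λ) → 0` as `Λ → 0⁺`. -/
theorem stmt_17 {d : ℕ} (p : ℝ) (hp : 1 ≤ p)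
    (ρ₀ : Measure (EuclideanSpace ℝ (Fin d))) [IsProbabilityMeasure ρ₀]
    (hmom : ∫⁻ x, (‖x‖₊ : ℝ≥0∞) ^ p ∂ρ₀ < ⊤)
    (ν : ℝ → Measure (EuclideanSpace ℝ (Fin d)))
    (hν : ∀ Λ : ℝ, 0 < Λ → IsProbabilityMeasure (ν Λ) ∧
      ∀ ν' : Measure (EuclideanSpace ℝ (Fin d)), IsProbabilityMeasure ν' →
        energyF p Λ ρ₀ (ν Λ) ≤ energyF p Λ ρ₀ ν') :
    Tendsto (fun Λ : ℝ => (Wpp p ρ₀ (ν Λ)) ^ (1 / p)) (𝓝[>] (0:ℝ)) (𝓝 0) := by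
  rw [ENNReal.tendsto_nhds_zero]
  intro ε hε
  have hp0 : (0:ℝ) < p := lt_of_lt_of_le one_pos hp
  set c : ℝ≥0∞ := (min 1 ε) ^ p with hcdef
  have hc : 0 < c := ENNReal.rpow_pos (lt_min one_pos hε)
    ((min_le_left _ _).trans_lt ENNReal.one_lt_top).ne
  have hc2 : (0:ℝ≥0∞) < c / 2 := ENNReal.div_pos hc.ne' ENNReal.ofNat_ne_top
  obtain ⟨ν', hν'prob, hW, hlen⟩ := Stmt17Aux.exists_competitor p hp ρ₀ hmom hc2
  have htendΛ : Tendsto (fun Λ : ℝ => ENNReal.ofReal Λ * lengthF ν') (𝓝[>] (0:ℝ)) (𝓝 0) := by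
    have h1 : Tendsto (fun Λ : ℝ => ENNReal.ofReal Λ) (𝓝[>] (0:ℝ)) (𝓝 0) := by
      have h2 := (ENNReal.continuous_ofReal.tendsto 0)
      simpa [ENNReal.ofReal_zero] using h2.mono_left nhdsWithin_le_nhds
    have h3 := ENNReal.Tendsto.mul_const h1 (Or.inr hlen.ne)
    simpa using h3
  have hev := ENNReal.tendsto_nhds_zero.mp htendΛ (c/2) hc2
  filter_upwards [hev, self_mem_nhdsWithin] with Λ hΛlen hΛpos
  have hmin := (hν Λ hΛpos).2 ν' hν'prob
  have hchain : Wpp p ρ₀ (ν Λ) ≤ c := by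
    calc Wpp p ρ₀ (ν Λ) ≤ energyF p Λ ρ₀ (ν Λ) := le_add_right le_rfl
      _ ≤ energyF p Λ ρ₀ ν' := hmin
      _ = Wpp p ρ₀ ν' + ENNReal.ofReal Λ * lengthF ν' := rfl
      _ ≤ c/2 + c/2 := add_le_add hW hΛlen
      _ = c := ENNReal.add_halves c
  calc Wpp p ρ₀ (ν Λ) ^ (1/p) ≤ c ^ (1/p) := ENNReal.rpow_le_rpow hchain (by positivity)
    _ = min 1 ε := by
        rw [hcdef, ← ENNReal.rpow_mul, mul_one_div_cancel hp0.ne', ENNReal.rpow_one]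
    _ ≤ ε := min_le_right _ _

end
end
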